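/- arXiv:1702.02685 — 9 statements merged into one kernel-verified Lean document; each statement's English description precedes it below -/
import Mathlib

section
/- Let q ≥ 2 and e ≥ 0 be integers, and define f(n) = ∑_{i=0}^{e} C(n,i)(q-1)^i. Then for all integers n1 ≤ n2 with n1 ≥ 1, f(n1-1)·f(n2+1) ≤ f(n1)·f(n2). -/
/-!
Write `V e n = ∑_{i ≤ e} C(n, i) aⁱ` with `a = q - 1`. The point is that `n ↦ V e n` is
log-concave, so that the ratios `V e (n + 1) / V e n` decrease. Pascal's rule gives
`V (e + 1) (n + 1) = V (e + 1) n + a V e n`, which reduces log-concavity in `n` to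
log-concavity in the radius `e`, `V e n · V (e + 2) n ≤ V (e + 1) n ²`. That in turn follows
from the log-concavity of the terms `C(n, i) aⁱ` in `i`, i.e. of the binomial coefficients.
-/

open Finset

theorem Nat.choose_mul_choose_succ_le {m i j : ℕ} (hij : i ≤ j) :
    m.choose i * m.choose (j + 1) ≤ m.choose (i + 1) * m.choose j := by
  have key : (m - j) * (i + 1) ≤ (m - i) * (j + 1) :=
    Nat.mul_le_mul (Nat.sub_le_sub_left hij m) (by omega)
  refine Nat.le_of_mul_le_mul_right ?_ (by positivity : 0 < (i + 1) * (j + 1))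
  calc m.choose i * m.choose (j + 1) * ((i + 1) * (j + 1))
      = m.choose i * (i + 1) * (m.choose (j + 1) * (j + 1)) := by ring
    _ = m.choose i * m.choose j * ((m - j) * (i + 1)) := by
        rw [Nat.choose_succ_right_eq]; ring
    _ ≤ m.choose i * m.choose j * ((m - i) * (j + 1)) := Nat.mul_le_mul_left _ key
    _ = m.choose (i + 1) * (i + 1) * (m.choose j * (j + 1)) := by
        rw [Nat.choose_succ_right_eq]; ring
    _ = m.choose (i + 1) * m.choose j * ((i + 1) * (j + 1)) := by ring

theorem Nat.choose_mul_pow_mul_succ_le (a n : ℕ) {i j : ℕ} (hij : i ≤ j) :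
    n.choose i * a ^ i * (n.choose (j + 1) * a ^ (j + 1)) ≤
      n.choose (i + 1) * a ^ (i + 1) * (n.choose j * a ^ j) := by
  calc n.choose i * a ^ i * (n.choose (j + 1) * a ^ (j + 1))
      = n.choose i * n.choose (j + 1) * a ^ (i + j + 1) := by ring
    _ ≤ n.choose (i + 1) * n.choose j * a ^ (i + j + 1) :=
      Nat.mul_le_mul_right _ (Nat.choose_mul_choose_succ_le hij)
    _ = n.choose (i + 1) * a ^ (i + 1) * (n.choose j * a ^ j) := by ring

theorem mul_le_mul_of_log_concave {u : ℕ → ℕ} (hpos : ∀ n, 0 < u n)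
    (hu : ∀ n, u n * u (n + 2) ≤ u (n + 1) ^ 2) {n m : ℕ} (hnm : n ≤ m) :
    u n * u (m + 2) ≤ u (n + 1) * u (m + 1) := by
  induction m, hnm using Nat.le_induction with
  | base => simpa [sq] using hu n
  | succ m _ ih =>
    refine Nat.le_of_mul_le_mul_right ?_ (hpos (m + 1))
    calc u n * u (m + 3) * u (m + 1) = u n * (u (m + 1) * u (m + 1 + 2)) := by ring
      _ ≤ u n * u (m + 2) * u (m + 2) := by
        rw [mul_assoc, ← sq]; exact Nat.mul_le_mul_left _ (hu (m + 1))
      _ ≤ u (n + 1) * u (m + 1) * u (m + 2) := Nat.mul_le_mul_right _ ih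
      _ = u (n + 1) * u (m + 2) * u (m + 1) := by ring

def ballVolume (a e n : ℕ) : ℕ := ∑ i ∈ range (e + 1), n.choose i * a ^ i

section

variable (a e n : ℕ)

theorem ballVolume_pos : 0 < ballVolume a e n :=
  sum_pos' (fun _ _ => Nat.zero_le _) ⟨0, by simp, by simp⟩

@[simp]
theorem ballVolume_zero_radius : ballVolume a 0 n = 1 := by
  simp [ballVolume]

theorem ballVolume_succ_radius :
    ballVolume a (e + 1) n = ballVolume a e n + n.choose (e + 1) * a ^ (e + 1) :=
  sum_range_succ _ _

theorem ballVolume_succ_succ :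
    ballVolume a (e + 1) (n + 1) = ballVolume a (e + 1) n + a * ballVolume a e n := by
  simp only [ballVolume, sum_range_succ' _ (e + 1), Nat.choose_succ_succ', add_mul,
    sum_add_distrib, Nat.choose_zero_right, mul_sum]
  have shift : ∑ i ∈ range (e + 1), n.choose i * a ^ (i + 1) =
      ∑ i ∈ range (e + 1), a * (n.choose i * a ^ i) := sum_congr rfl fun i _ => by ring
  rw [shift]
  ring

theorem ballVolume_radius_log_concave :
    ballVolume a e n * ballVolume a (e + 2) n ≤ ballVolume a (e + 1) n ^ 2 := by
  have key : ballVolume a e n * (n.choose (e + 2) * a ^ (e + 2)) ≤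
      ballVolume a (e + 1) n * (n.choose (e + 1) * a ^ (e + 1)) := by
    rw [ballVolume, ballVolume, sum_mul, sum_mul, sum_range_succ' _ (e + 1)]
    refine le_trans (sum_le_sum fun i hi => ?_) (Nat.le_add_right _ _)
    exact Nat.choose_mul_pow_mul_succ_le a n (by simp at hi; omega)
  rw [ballVolume_succ_radius a (e + 1), ballVolume_succ_radius a e] at *
  nlinarith [key]

theorem ballVolume_succ_radius_mul_succ_le :
    ballVolume a (e + 1) n * ballVolume a e (n + 1) ≤
      ballVolume a e n * ballVolume a (e + 1) (n + 1) := by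
  rw [ballVolume_succ_succ a e n]
  cases e with
  | zero => simp
  | succ e =>
    rw [ballVolume_succ_succ a e n]
    nlinarith [ballVolume_radius_log_concave a e n]

theorem ballVolume_log_concave :
    ballVolume a e n * ballVolume a e (n + 2) ≤ ballVolume a e (n + 1) ^ 2 := by
  cases e with
  | zero => simp
  | succ e =>
    have cross := ballVolume_succ_radius_mul_succ_le a e n
    rw [ballVolume_succ_succ a e (n + 1), ballVolume_succ_succ a e n] at *
    nlinarith [cross]

end

theorem ball_volume_log_convex_general (q e : ℕ)
    (f : ℕ → ℕ) (hf : ∀ n, f n = ∑ i ∈ range (e + 1), n.choose i * (q - 1) ^ i)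
    (n1 n2 : ℕ) (h1 : 1 ≤ n1) (h12 : n1 ≤ n2) :
    f (n1 - 1) * f (n2 + 1) ≤ f n1 * f n2 := by
  obtain rfl : f = ballVolume (q - 1) e := funext hf
  obtain ⟨n, rfl⟩ : ∃ n, n1 = n + 1 := ⟨n1 - 1, by omega⟩
  obtain ⟨m, rfl⟩ : ∃ m, n2 = m + 1 := ⟨n2 - 1, by omega⟩
  exact mul_le_mul_of_log_concave (ballVolume_pos _ e) (ballVolume_log_concave _ e) (by omega)

theorem ball_volume_log_convex (q e : ℕ) (hq : 2 ≤ q)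
    (f : ℕ → ℕ) (hf : ∀ n, f n = ∑ i ∈ range (e + 1), n.choose i * (q - 1) ^ i)
    (n1 n2 : ℕ) (h1 : 1 ≤ n1) (h12 : n1 ≤ n2) :
    f (n1 - 1) * f (n2 + 1) ≤ f n1 * f n2 :=
  ball_volume_log_convex_general q e f hf n1 n2 h1 h12
end

section
/- Let q ≥ 2 and e ≥ 0 be integers, and define B_H(n) = q^n / (∑_{i=0}^{e} C(n,i)(q-1)^i). Then B_H is log-convex in n: for all integers n1 ≤ n2 with n1 ≥ 1, B_H(n1)·B_H(n2) ≤ B_H(n1-1)·B_H(n2+1). -/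
/-!
With `x = q - 1`, the denominator of `B_H(n)` is the volume `V(n) = ∑_{i ≤ e} C(n,i) xⁱ` of a
Hamming ball, and the claim is equivalent to `V(n₁ - 1) V(n₂ + 1) ≤ V(n₁) V(n₂)`, i.e. to the
ratio `V(n + 1) / V(n)` being antitone, i.e. to log-concavity of `V` in `n`. Pascal's rule
`V_{n+1}(e+1) = V_n(e+1) + x V_n(e)` reduces log-concavity in `n` to log-concavity in the radius
`e`, which holds because the terms `C(n,i) xⁱ` have antitone ratios.
-/

open Finset

namespace HammingBound

theorem mul_succ_le_succ_mul_of_mul_le_sq {f : ℕ → ℝ} (hpos : ∀ n, 0 < f n)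
    (hf : ∀ n, f n * f (n + 2) ≤ f (n + 1) ^ 2) {m n : ℕ} (hmn : m ≤ n) :
    f m * f (n + 1) ≤ f (m + 1) * f n := by
  have hratio : Antitone fun n => f (n + 1) / f n := by
    refine antitone_nat_of_succ_le fun n => ?_
    rw [div_le_div_iff₀ (hpos _) (hpos _)]
    nlinarith [hf n]
  have := hratio hmn
  rwa [div_le_div_iff₀ (hpos _) (hpos _), mul_comm (f (n + 1))] at this

section PartialSums

variable {a : ℕ → ℝ}

theorem sum_range_mul_sum_range_add_two_le_sq (ha : ∀ i, 0 ≤ a i)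
    (hratio : ∀ j k, j < k → a j * a (k + 1) ≤ a (j + 1) * a k) (k : ℕ) :
    (∑ i ∈ range k, a i) * ∑ i ∈ range (k + 2), a i ≤ (∑ i ∈ range (k + 1), a i) ^ 2 := by
  have hshift : (∑ i ∈ range k, a i) * a (k + 1) ≤ (∑ i ∈ range (k + 1), a i) * a k :=
    calc (∑ i ∈ range k, a i) * a (k + 1)
        ≤ (∑ i ∈ range k, a (i + 1)) * a k := by
          rw [sum_mul, sum_mul]
          exact sum_le_sum fun i hi => hratio i k (mem_range.mp hi)
      _ ≤ (∑ i ∈ range (k + 1), a i) * a k := by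
          gcongr
          · exact ha k
          · rw [sum_range_succ' a k]
            linarith [ha 0]
  rw [sum_range_succ a (k + 1), sum_range_succ a k] at *
  nlinarith [ha k]

end PartialSums

theorem _root_.Nat.choose_mul_choose_succ_le_s1 {n j k : ℕ} (h : j ≤ k) :
    n.choose j * n.choose (k + 1) ≤ n.choose (j + 1) * n.choose k := by
  rcases le_or_gt n k with hnk | hkn
  · simp [Nat.choose_eq_zero_of_lt (Nat.lt_succ_of_le hnk)]
  have key : (n - k) * (j + 1) ≤ (n - j) * (k + 1) := by
    zify [hkn.le, h.trans hkn.le]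
    nlinarith
  refine Nat.le_of_mul_le_mul_right ?_ (Nat.mul_pos j.succ_pos k.succ_pos)
  calc n.choose j * n.choose (k + 1) * ((j + 1) * (k + 1))
      = n.choose j * (j + 1) * (n.choose (k + 1) * (k + 1)) := by ring
    _ = n.choose j * n.choose k * ((n - k) * (j + 1)) := by rw [Nat.choose_succ_right_eq]; ring
    _ ≤ n.choose j * n.choose k * ((n - j) * (k + 1)) := Nat.mul_le_mul_left _ key
    _ = n.choose j * (n - j) * n.choose k * (k + 1) := by ring
    _ = n.choose (j + 1) * n.choose k * ((j + 1) * (k + 1)) := by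
        rw [← Nat.choose_succ_right_eq]; ring

theorem choose_mul_pow_mul_le {x : ℝ} (hx : 0 ≤ x) (n : ℕ) {j k : ℕ} (h : j ≤ k) :
    (n.choose j * x ^ j) * (n.choose (k + 1) * x ^ (k + 1)) ≤
      (n.choose (j + 1) * x ^ (j + 1)) * (n.choose k * x ^ k) := by
  have hchoose : (n.choose j * n.choose (k + 1) : ℝ) ≤ n.choose (j + 1) * n.choose k := by
    exact_mod_cast Nat.choose_mul_choose_succ_le_s1 h
  calc (n.choose j * x ^ j) * (n.choose (k + 1) * x ^ (k + 1))
      = (n.choose j * n.choose (k + 1) : ℝ) * x ^ (j + k + 1) := by ring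
    _ ≤ (n.choose (j + 1) * n.choose k : ℝ) * x ^ (j + k + 1) := by gcongr
    _ = (n.choose (j + 1) * x ^ (j + 1)) * (n.choose k * x ^ k) := by ring

/-- `k` counts terms: the Hamming ball of radius `e` corresponds to `k = e + 1`. -/
noncomputable def binomialPartialSum (x : ℝ) (n k : ℕ) : ℝ :=
  ∑ i ∈ range k, (n.choose i : ℝ) * x ^ i

theorem one_le_binomialPartialSum {x : ℝ} (hx : 0 ≤ x) (n k : ℕ) :
    1 ≤ binomialPartialSum x n (k + 1) := by
  have h := single_le_sum (f := fun i => (n.choose i : ℝ) * x ^ i)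
    (fun i _ => by positivity) (mem_range.mpr k.succ_pos)
  simpa [binomialPartialSum] using h

theorem binomialPartialSum_succ_succ (x : ℝ) (n k : ℕ) :
    binomialPartialSum x (n + 1) (k + 1) =
      binomialPartialSum x n (k + 1) + x * binomialPartialSum x n k := by
  have hterm : ∀ i, ((n + 1).choose (i + 1) : ℝ) * x ^ (i + 1) =
      (n.choose (i + 1) : ℝ) * x ^ (i + 1) + x * ((n.choose i : ℝ) * x ^ i) := fun i => by
    rw [Nat.choose_succ_succ', Nat.cast_add]
    ring
  simp only [binomialPartialSum]
  rw [sum_range_succ' _ k, sum_range_succ' (fun i => (n.choose i : ℝ) * x ^ i) k, mul_sum]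
  simp only [hterm, sum_add_distrib, Nat.choose_zero_right]
  ring

theorem binomialPartialSum_mul_le_sq {x : ℝ} (hx : 0 ≤ x) (n k : ℕ) :
    binomialPartialSum x n k * binomialPartialSum x (n + 2) k ≤
      binomialPartialSum x (n + 1) k ^ 2 := by
  rcases k with _ | _ | k
  · simp [binomialPartialSum]
  · simp [binomialPartialSum]
  have hlength : binomialPartialSum x n k * binomialPartialSum x n (k + 2) ≤
      binomialPartialSum x n (k + 1) ^ 2 :=
    sum_range_mul_sum_range_add_two_le_sq (fun i => by positivity)
      (fun j k hjk => choose_mul_pow_mul_le hx n hjk.le) k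
  rw [binomialPartialSum_succ_succ x (n + 1), binomialPartialSum_succ_succ x n,
    binomialPartialSum_succ_succ x n k]
  nlinarith [mul_le_mul_of_nonneg_left hlength (sq_nonneg x)]

end HammingBound

open HammingBound in
theorem hamming_bound_log_convex (q e : ℕ) (hq : 2 ≤ q)
    (B : ℕ → ℝ)
    (hB : ∀ n, B n = (q : ℝ) ^ n /
      ∑ i ∈ range (e + 1), (n.choose i : ℝ) * ((q : ℝ) - 1) ^ i)
    (n1 n2 : ℕ) (h1 : 1 ≤ n1) (h12 : n1 ≤ n2) :
    B n1 * B n2 ≤ B (n1 - 1) * B (n2 + 1) := by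
  obtain ⟨m, rfl⟩ := Nat.exists_eq_add_of_le' h1
  have hx : (0 : ℝ) ≤ q - 1 := by
    have : (2 : ℝ) ≤ q := by exact_mod_cast hq
    linarith
  set V := fun n => binomialPartialSum (q - 1) n (e + 1)
  have hB' : ∀ n, B n = (q : ℝ) ^ n / V n := hB
  have hV : ∀ n, 0 < V n := fun n => one_pos.trans_le (one_le_binomialPartialSum hx n e)
  have hlogconcave : V m * V (n2 + 1) ≤ V (m + 1) * V n2 :=
    mul_succ_le_succ_mul_of_mul_le_sq hV (binomialPartialSum_mul_le_sq hx · (e + 1)) (by omega)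
  have hnum : (q : ℝ) ^ (m + 1) * q ^ n2 = q ^ m * q ^ (n2 + 1) := by ring
  rw [hB', hB', hB', hB', Nat.add_sub_cancel, div_mul_div_comm, div_mul_div_comm, hnum]
  exact div_le_div_of_nonneg_left (by positivity) (mul_pos (hV _) (hV _)) hlogconcave
end

section
/- Let C be a q-ary code of length n and minimum distance d, and suppose every coordinate i lies in a repair group R_i ⊆ [n] of size at most N = r+ρ-1 such that the restriction of C to R_i has minimum distance at least ρ. Then log_q |C| ≤ μ · log_q B(N, ρ), where μ = ⌈(n-(d-1))/N⌉ + 1 and B(ℓ, ρ) is any log-convex (in ℓ) upper bound on the size of q-ary codes of length ℓ and distance ρ with B(0,ρ)=1. -/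
/-!
Fix the codewords on a set `S` of coordinates and pick a coordinate `i ∉ S`. Projecting the
subcode onto the `a ≤ N` new coordinates `T = R i \ S` gives a code of distance `ρ`, so at most
`B a` values occur, and each fibre is a subcode fixed on `S ∪ T`. Iterating until fewer than `d`
coordinates are free (when at most one codeword is left) bounds `|C|` by a product `∏ B aⱼ` with
`aⱼ ≤ N` and `∑ aⱼ < n - (d - 1) + N`. Log-convexity with `B 0 = 1` lets two factors be merged
or rebalanced towards `B N`, so the product is at most `B N ^ μ`.
-/

open Finset

def LogConvex (B : ℕ → ℝ) : Prop :=
  ∀ j1 j2 : ℕ, 1 ≤ j1 → j1 ≤ j2 → B j1 * B j2 ≤ B (j1 - 1) * B (j2 + 1)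

namespace LogConvex

variable {B : ℕ → ℝ}

theorem mul_le_mul_sub_add (hB : LogConvex B) {k a b : ℕ} (hab : a ≤ b) (hk : k ≤ a) :
    B a * B b ≤ B (a - k) * B (b + k) := by
  induction k generalizing a b with
  | zero => simp
  | succ k ih =>
    calc B a * B b ≤ B (a - 1) * B (b + 1) := hB a b (by omega) hab
      _ ≤ B (a - 1 - k) * B (b + 1 + k) := ih (by omega) (by omega)
      _ = B (a - (k + 1)) * B (b + (k + 1)) := by rw [Nat.sub_sub, Nat.add_assoc, Nat.add_comm 1 k]

theorem mul_le_add (hB : LogConvex B) (hB0 : B 0 = 1) (a b : ℕ) : B a * B b ≤ B (a + b) := by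
  wlog hab : a ≤ b generalizing a b
  · rw [mul_comm, add_comm]
    exact this b a (by omega)
  simpa [hB0, add_comm] using hB.mul_le_mul_sub_add hab le_rfl

theorem mul_le_sub_mul (hB : LogConvex B) {N a b : ℕ} (ha : a ≤ N) (hb : b ≤ N)
    (hab : N ≤ a + b) : B a * B b ≤ B (a + b - N) * B N := by
  wlog hle : a ≤ b generalizing a b
  · rw [mul_comm, add_comm]
    exact this hb ha (by omega) (by omega)
  have h := hB.mul_le_mul_sub_add (k := N - b) hle (by omega)
  rwa [show a - (N - b) = a + b - N by omega, show b + (N - b) = N by omega] at h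

theorem monotone (hB : LogConvex B) (hB0 : B 0 = 1) (hB1 : ∀ j, 1 ≤ B j) : Monotone B :=
  monotone_nat_of_le_succ fun j =>
    calc B j ≤ B j * B 1 := le_mul_of_one_le_right (zero_le_one.trans (hB1 j)) (hB1 1)
      _ ≤ B (j + 1) := hB.mul_le_add hB0 j 1

end LogConvex

/-- `x` cut into `x / N` blocks of length `N` and a remainder: by `LogConvex.mul_blockBound_le`
this dominates `∏ B aⱼ` whenever `x = ∑ aⱼ` with all `aⱼ ≤ N`. -/
def blockBound (B : ℕ → ℝ) (N x : ℕ) : ℝ :=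
  B (x % N) * B N ^ (x / N)

section blockBound

variable {B : ℕ → ℝ} {N : ℕ}

theorem one_le_blockBound (hB1 : ∀ j, 1 ≤ B j) (x : ℕ) : 1 ≤ blockBound B N x :=
  one_le_mul_of_one_le_of_one_le (hB1 _) (one_le_pow₀ (hB1 N))

theorem blockBound_add_mul (hN : 0 < N) (y k : ℕ) :
    blockBound B N (y + N * k) = blockBound B N y * B N ^ k := by
  simp only [blockBound, Nat.add_mul_mod_self_left, Nat.add_mul_div_left _ _ hN, pow_add]
  ring

theorem LogConvex.mul_le_blockBound (hB : LogConvex B) (hB0 : B 0 = 1) (hN : 0 < N) {r a : ℕ}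
    (hr : r < N) (ha : a ≤ N) : B r * B a ≤ blockBound B N (r + a) := by
  rcases lt_or_ge (r + a) N with h | h
  · rw [blockBound, Nat.mod_eq_of_lt h, Nat.div_eq_of_lt h, pow_zero, mul_one]
    exact hB.mul_le_add hB0 r a
  · rw [show r + a = r + a - N + N * 1 by omega, blockBound_add_mul hN, blockBound,
      Nat.mod_eq_of_lt (by omega), Nat.div_eq_of_lt (by omega), pow_zero, mul_one, pow_one]
    exact hB.mul_le_sub_mul hr.le ha h

theorem LogConvex.mul_blockBound_le (hB : LogConvex B) (hB0 : B 0 = 1) (hB1 : ∀ j, 1 ≤ B j)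
    (hN : 0 < N) {a : ℕ} (ha : a ≤ N) (x : ℕ) :
    B a * blockBound B N x ≤ blockBound B N (x + a) := by
  have hx := Nat.mod_add_div x N
  calc B a * blockBound B N x = B (x % N) * B a * B N ^ (x / N) := by rw [blockBound]; ring
    _ ≤ blockBound B N (x % N + a) * B N ^ (x / N) :=
      mul_le_mul_of_nonneg_right (hB.mul_le_blockBound hB0 hN (Nat.mod_lt x hN) ha)
        (pow_nonneg (zero_le_one.trans (hB1 N)) _)
    _ = blockBound B N (x + a) := by
      rw [← blockBound_add_mul hN]
      congr 1
      omega

theorem blockBound_le_pow (hmono : Monotone B) (hB1 : ∀ j, 1 ≤ B j) (hN : 0 < N) (x : ℕ) :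
    blockBound B N x ≤ B N ^ (x / N + 1) := by
  rw [blockBound, pow_succ, mul_comm]
  exact mul_le_mul_of_nonneg_left (hmono (Nat.mod_lt x hN).le)
    (pow_nonneg (zero_le_one.trans (hB1 N)) _)

end blockBound

theorem add_sub_one_div_le_ceil_div {m N : ℕ} (hN : 0 < N) :
    (m + N - 1) / N ≤ ⌈(m : ℝ) / N⌉₊ := by
  have h : (m : ℝ) / N ≤ ⌈(m : ℝ) / N⌉₊ := Nat.le_ceil _
  rw [div_le_iff₀ (by positivity)] at h
  have h' : m ≤ ⌈(m : ℝ) / N⌉₊ * N := by exact_mod_cast h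
  exact Nat.le_of_lt_succ ((Nat.div_lt_iff_lt_mul hN).2 (by rw [Nat.succ_mul]; omega))

theorem card_le_card_image_mul {α β : Type*} [DecidableEq β] (s : Finset α) (f : α → β) {b : ℝ}
    (hb : ∀ y ∈ s.image f, (#{x ∈ s | f x = y} : ℝ) ≤ b) : (#s : ℝ) ≤ #(s.image f) * b := by
  rw [card_eq_sum_card_image f s, Nat.cast_sum, ← nsmul_eq_mul]
  exact sum_le_card_nsmul _ _ _ hb

section Code

variable {ι κ Q : Type*} [DecidableEq Q]

def MinDistAtLeast [Fintype ι] (D : Finset (ι → Q)) (δ : ℕ) : Prop :=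
  ∀ c ∈ D, ∀ c' ∈ D, c ≠ c' → δ ≤ hammingDist c c'

theorem hammingDist_comp_equiv [Fintype ι] [Fintype κ] (σ : κ ≃ ι) (c c' : ι → Q) :
    hammingDist (c ∘ σ) (c' ∘ σ) = hammingDist c c' :=
  card_equiv σ (by simp)

theorem MinDistAtLeast.card_le_of_forall_fin {ρ : ℕ} {B : ℕ → ℝ}
    (hB : ∀ ℓ (D : Finset (Fin ℓ → Q)), MinDistAtLeast D ρ → (#D : ℝ) ≤ B ℓ)
    [Fintype ι] {D : Finset (ι → Q)} (hD : MinDistAtLeast D ρ) :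
    (#D : ℝ) ≤ B (Fintype.card ι) := by
  let e := (Fintype.equivFin ι).arrowCongr (Equiv.refl Q)
  rw [← card_map e.toEmbedding]
  refine hB _ _ ?_
  simp only [MinDistAtLeast, mem_map_equiv]
  intro v hv v' hv' hne
  exact (hD _ hv _ hv' (by simpa using hne)).trans_eq (hammingDist_comp_equiv _ v v')

theorem hammingDist_restrict (T : Finset ι) (c c' : ι → Q) :
    hammingDist (T.restrict c) (T.restrict c') = #{j ∈ T | c j ≠ c' j} := by
  rw [hammingDist, univ_eq_attach]
  exact (congrArg card (filter_attach (fun j => c j ≠ c' j) T)).trans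
    ((card_map _).trans card_attach)

theorem card_image_restrict_sdiff_le [DecidableEq ι] {ρ : ℕ} {B : ℕ → ℝ} {D : Finset (ι → Q)}
    {R S : Finset ι}
    (hB : ∀ D' : Finset ((R \ S : Finset ι) → Q), MinDistAtLeast D' ρ → (#D' : ℝ) ≤ B #(R \ S))
    (hR : ∀ c ∈ D, ∀ c' ∈ D, (∃ j ∈ R, c j ≠ c' j) → ρ ≤ #{j ∈ R | c j ≠ c' j})
    (hDS : ∀ c ∈ D, ∀ c' ∈ D, Set.EqOn c c' S) :
    (#(D.image (R \ S).restrict) : ℝ) ≤ B #(R \ S) := by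
  refine hB _ ?_
  simp only [MinDistAtLeast, mem_image]
  rintro _ ⟨c, hc, rfl⟩ _ ⟨c', hc', rfl⟩ hne
  obtain ⟨⟨j, hj⟩, hjne⟩ := Function.ne_iff.1 hne
  rw [hammingDist_restrict]
  refine (hR c hc c' hc' ⟨j, (mem_sdiff.1 hj).1, hjne⟩).trans (card_le_card fun k hk => ?_)
  simp only [mem_filter, mem_sdiff] at hk ⊢
  exact ⟨⟨hk.1, fun hkS => hk.2 (hDS c hc c' hc' hkS)⟩, hk.2⟩

theorem MinDistAtLeast.card_le_one_of_eqOn [Fintype ι] [DecidableEq ι] {C D : Finset (ι → Q)}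
    {d : ℕ} {S : Finset ι} (hC : MinDistAtLeast C d) (hDC : D ⊆ C)
    (hDS : ∀ c ∈ D, ∀ c' ∈ D, Set.EqOn c c' S) (hS : #Sᶜ < d) : #D ≤ 1 := by
  refine card_le_one.2 fun c hc c' hc' => by_contra fun hne => ?_
  have hdiff : hammingDist c c' ≤ #Sᶜ := card_le_card fun j hj =>
    mem_compl.2 fun hjS => (mem_filter.1 hj).2 (hDS c hc c' hc' hjS)
  have := hC c (hDC hc) c' (hDC hc') hne
  omega

/-- The shift `N - 1` absorbs the last repair group, which may overshoot the budget `s`. -/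
theorem MinDistAtLeast.card_le_blockBound_of_eqOn [Fintype ι] [DecidableEq ι]
    {C : Finset (ι → Q)} {d ρ N : ℕ} {R : ι → Finset ι} {B : ℕ → ℝ}
    (hd : 0 < d) (hC : MinDistAtLeast C d) (hmem : ∀ i, i ∈ R i) (hcard : ∀ i, #(R i) ≤ N)
    (hloc : ∀ i, ∀ c ∈ C, ∀ c' ∈ C, (∃ j ∈ R i, c j ≠ c' j) → ρ ≤ #{j ∈ R i | c j ≠ c' j})
    (hB : LogConvex B) (hB0 : B 0 = 1) (hB1 : ∀ j, 1 ≤ B j)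
    (hBbound : ∀ T : Finset ι, ∀ D : Finset (T → Q), MinDistAtLeast D ρ → (#D : ℝ) ≤ B #T)
    (s : ℕ) {D : Finset (ι → Q)} {S : Finset ι} (hDC : D ⊆ C)
    (hDS : ∀ c ∈ D, ∀ c' ∈ D, Set.EqOn c c' S) (hS : #Sᶜ < s + d) :
    (#D : ℝ) ≤ blockBound B N (s + N - 1) := by
  induction s using Nat.strong_induction_on generalizing D S with
  | _ s ih =>
  by_cases hbase : #Sᶜ < d
  · exact (Nat.cast_le_one.2 (hC.card_le_one_of_eqOn hDC hDS hbase)).trans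
      (one_le_blockBound hB1 _)
  obtain ⟨i, hi⟩ : Sᶜ.Nonempty := card_pos.1 (by omega)
  set T := R i \ S
  have hT : 0 < #T := card_pos.2 ⟨i, mem_sdiff.2 ⟨hmem i, mem_compl.1 hi⟩⟩
  have hTN : #T ≤ N := (card_le_card sdiff_subset).trans (hcard i)
  have hfiber : ∀ v ∈ D.image T.restrict,
      (#{c ∈ D | T.restrict c = v} : ℝ) ≤ blockBound B N (s + N - 1 - #T) := by
    intro v _
    have hsub : {c ∈ D | T.restrict c = v} ⊆ C := (filter_subset _ _).trans hDC
    have hagree : ∀ c ∈ {c ∈ D | T.restrict c = v}, ∀ c' ∈ {c ∈ D | T.restrict c = v},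
        Set.EqOn c c' ↑(S ∪ T) := by
      simp only [mem_filter, coe_union]
      rintro c ⟨hc, hcv⟩ c' ⟨hc', hc'v⟩
      exact (hDS c hc c' hc').union fun j hj => congrFun (hcv.trans hc'v.symm) ⟨j, hj⟩
    have hcompl : #(S ∪ T)ᶜ = #Sᶜ - #T := by
      rw [compl_union, ← sdiff_eq_inter_compl,
        card_sdiff_of_subset fun j hj => mem_compl.2 (mem_sdiff.1 hj).2]
    rcases le_or_gt #T s with hTs | hsT
    · convert ih (s - #T) (by omega) hsub hagree (by rw [hcompl]; omega) using 2
      omega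
    · have hsmall : #(S ∪ T)ᶜ < d := by rw [hcompl]; omega
      exact (Nat.cast_le_one.2 (hC.card_le_one_of_eqOn hsub hagree hsmall)).trans
        (one_le_blockBound hB1 _)
  calc (#D : ℝ) ≤ #(D.image T.restrict) * blockBound B N (s + N - 1 - #T) :=
        card_le_card_image_mul _ _ hfiber
    _ ≤ B #T * blockBound B N (s + N - 1 - #T) :=
        mul_le_mul_of_nonneg_right (card_image_restrict_sdiff_le (hBbound T)
          (fun c hc c' hc' => hloc i c (hDC hc) c' (hDC hc')) hDS)
          (zero_le_one.trans (one_le_blockBound hB1 _))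
    _ ≤ blockBound B N (s + N - 1 - #T + #T) := hB.mul_blockBound_le hB0 hB1 (by omega) hTN _
    _ = blockBound B N (s + N - 1) := by congr 1; omega

end Code

theorem recursive_LRC_bound_general {Q : Type*} [Fintype Q] [DecidableEq Q]
    (q n d r ρ N : ℕ) (hq : Fintype.card Q = q) (hq2 : 2 ≤ q)
    (hρ : 2 ≤ ρ) (hN : N = r + ρ - 1) (hd1 : 1 ≤ d)
    (C : Finset (Fin n → Q)) (hCne : C.Nonempty)
    (hdist : ∀ c ∈ C, ∀ c' ∈ C, c ≠ c' →
      d ≤ (univ.filter fun i => c i ≠ c' i).card)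
    (R : Fin n → Finset (Fin n))
    (hmem : ∀ i, i ∈ R i) (hcard : ∀ i, (R i).card ≤ N)
    (hloc : ∀ i, ∀ c ∈ C, ∀ c' ∈ C, (∃ j ∈ R i, c j ≠ c' j) →
      ρ ≤ ((R i).filter fun j => c j ≠ c' j).card)
    (B : ℕ → ℝ) (hB0 : B 0 = 1)
    (hBconv : ∀ j1 j2 : ℕ, 1 ≤ j1 → j1 ≤ j2 → B j1 * B j2 ≤ B (j1 - 1) * B (j2 + 1))
    (hBbound : ∀ ℓ : ℕ, ∀ D : Finset (Fin ℓ → Q),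
      (∀ c ∈ D, ∀ c' ∈ D, c ≠ c' → ρ ≤ (univ.filter fun i => c i ≠ c' i).card) →
      (D.card : ℝ) ≤ B ℓ)
    (μ : ℕ) (hμ : μ = ⌈((n - (d - 1) : ℕ) : ℝ) / N⌉₊ + 1) :
    Real.logb q C.card ≤ μ * Real.logb q (B N) := by
  have hN0 : 0 < N := by omega
  have hB1 : ∀ j, 1 ≤ B j := fun j => by
    have : Nonempty Q := Fintype.card_pos_iff.1 (by omega)
    simpa using hBbound j {fun _ => Classical.arbitrary Q} (by simp)
  have hBT : ∀ T : Finset (Fin n), ∀ D : Finset (T → Q), MinDistAtLeast D ρ → (#D : ℝ) ≤ B #T :=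
    fun T D hD => Fintype.card_coe T ▸ hD.card_le_of_forall_fin hBbound
  have hC : (#C : ℝ) ≤ blockBound B N (n - (d - 1) + N - 1) :=
    MinDistAtLeast.card_le_blockBound_of_eqOn hd1 hdist hmem hcard hloc hBconv hB0 hB1 hBT _
      subset_rfl (S := ∅) (by simp) (by rw [compl_empty, card_univ, Fintype.card_fin]; omega)
  have hexp : (n - (d - 1) + N - 1) / N + 1 ≤ μ :=
    hμ ▸ Nat.add_le_add_right (add_sub_one_div_le_ceil_div hN0) 1
  calc Real.logb q #C ≤ Real.logb q (B N ^ μ) :=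
        Real.logb_le_logb_of_le (by exact_mod_cast hq2) (by exact_mod_cast hCne.card_pos)
          (hC.trans ((blockBound_le_pow (LogConvex.monotone hBconv hB0 hB1) hB1 hN0 _).trans
            (pow_le_pow_right₀ (hB1 N) hexp)))
    _ = μ * Real.logb q (B N) := Real.logb_pow _ _ _

theorem recursive_LRC_bound {Q : Type*} [Fintype Q] [DecidableEq Q]
    (q n d r ρ N : ℕ) (hq : Fintype.card Q = q) (hq2 : 2 ≤ q)
    (hρ : 2 ≤ ρ) (hN : N = r + ρ - 1) (hd1 : 1 ≤ d)
    (C : Finset (Fin n → Q)) (hCne : C.Nonempty)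
    (hdist : ∀ c ∈ C, ∀ c' ∈ C, c ≠ c' →
      d ≤ (univ.filter fun i => c i ≠ c' i).card)
    (R : Fin n → Finset (Fin n))
    (hmem : ∀ i, i ∈ R i) (hcard : ∀ i, (R i).card ≤ N)
    (hloc : ∀ i, ∀ c ∈ C, ∀ c' ∈ C, (∃ j ∈ R i, c j ≠ c' j) →
      ρ ≤ ((R i).filter fun j => c j ≠ c' j).card)
    (B : ℕ → ℝ) (hBpos : ∀ ℓ, 0 < B ℓ) (hB0 : B 0 = 1)
    (hBconv : ∀ j1 j2 : ℕ, 1 ≤ j1 → j1 ≤ j2 → B j1 * B j2 ≤ B (j1 - 1) * B (j2 + 1))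
    (hBbound : ∀ ℓ : ℕ, ∀ D : Finset (Fin ℓ → Q),
      (∀ c ∈ D, ∀ c' ∈ D, c ≠ c' → ρ ≤ (univ.filter fun i => c i ≠ c' i).card) →
      (D.card : ℝ) ≤ B ℓ)
    (μ : ℕ) (hμ : μ = ⌈((n - (d - 1) : ℕ) : ℝ) / N⌉₊ + 1) :
    Real.logb q C.card ≤ μ * Real.logb q (B N) :=
  recursive_LRC_bound_general q n d r ρ N hq hq2 hρ hN hd1 C hCne hdist R hmem hcard hloc B hB0
    hBconv hBbound μ hμ
end

section
/- Let C be a q-ary (n,k,r,ρ) LRC code with distance d, N = r+ρ-1, and μ = ⌈(n-(d-1))/N⌉ + 1. If ρ > N(q-1)/q, then k ≤ μ · log_q ( ρ / (ρ - N(q-1)/q) ). -/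
open Finset

lemma plotkin_count {Q : Type*} [Fintype Q] [DecidableEq Q] {n q ρ : ℕ}
    (hq : Fintype.card Q = q) (T : Finset (Fin n)) (V : Finset (Fin n → Q))
    (hd : ∀ u ∈ V, ∀ v ∈ V, u ≠ v → ρ ≤ (T.filter fun i => u i ≠ v i).card) :
    q * (ρ * (V.card * (V.card - 1))) ≤ T.card * ((q - 1) * V.card ^ 2) := by
  set M := V.card with hM
  -- Step C: per coordinate bound
  have hEi : ∀ i : Fin n,
      q * (∑ u ∈ V, (V.filter fun v => u i ≠ v i).card) ≤ (q - 1) * M ^ 2 := by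
    intro i
    rcases Nat.eq_zero_or_pos q with hq0 | hqpos
    · simp [hq0]
    set F : Q → ℕ := fun a => (V.filter fun v => v i = a).card with hF
    have hsplit : ∀ u ∈ V,
        (V.filter fun v => u i ≠ v i).card + F (u i) = M := by
      intro u _
      have h := Finset.card_filter_add_card_filter_not
        (s := V) (p := fun v => u i ≠ v i)
      simpa [hF, not_not, eq_comm] using h
    have hfib : ∑ u ∈ V, F (u i) = ∑ a : Q, F a ^ 2 := by
      rw [← Finset.sum_fiberwise_of_maps_to (g := fun u : Fin n → Q => u i)
        (t := univ) (fun u _ => mem_univ _) (fun u => F (u i))]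
      refine Finset.sum_congr rfl fun a _ => ?_
      have : ∀ u ∈ V.filter (fun u : Fin n → Q => u i = a), F (u i) = F a := by
        intro u hu
        rw [(Finset.mem_filter.1 hu).2]
      rw [Finset.sum_congr rfl this, Finset.sum_const]
      have : (V.filter fun u : Fin n → Q => u i = a).card = F a := rfl
      rw [this, smul_eq_mul, sq]
    have hMsum : ∑ a : Q, F a = M :=
      (Finset.card_eq_sum_card_fiberwise (fun u _ => mem_univ (u i))).symm
    have cauchy : M ^ 2 ≤ q * ∑ a : Q, F a ^ 2 := by
      have h := sq_sum_le_card_mul_sum_sq (s := (univ : Finset Q)) (f := F)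
      rwa [hMsum, Finset.card_univ, hq] at h
    have hsum : (∑ u ∈ V, (V.filter fun v => u i ≠ v i).card) + ∑ a : Q, F a ^ 2
        = M ^ 2 := by
      calc (∑ u ∈ V, (V.filter fun v => u i ≠ v i).card) + ∑ a : Q, F a ^ 2
          = ∑ u ∈ V, ((V.filter fun v => u i ≠ v i).card + F (u i)) := by
            rw [Finset.sum_add_distrib, hfib]
        _ = ∑ _u ∈ V, M := Finset.sum_congr rfl hsplit
        _ = M ^ 2 := by rw [Finset.sum_const, smul_eq_mul, sq]
    -- conclude
    set E := ∑ u ∈ V, (V.filter fun v => u i ≠ v i).card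
    set G := ∑ a : Q, F a ^ 2
    have h1 : q * E + q * G = q * M ^ 2 := by rw [← hsum]; ring
    have hqM : (q - 1) * M ^ 2 + M ^ 2 = q * M ^ 2 := by
      rw [Nat.sub_one_mul, Nat.sub_add_cancel (Nat.le_mul_of_pos_left _ hqpos)]
    have h3 : q * E + M ^ 2 ≤ (q - 1) * M ^ 2 + M ^ 2 := by
      rw [hqM, ← h1]
      exact Nat.add_le_add_left cauchy _
    exact Nat.le_of_add_le_add_right h3
  -- Step B: double counting
  have stepB : ∑ u ∈ V, ∑ v ∈ V, (T.filter fun i => u i ≠ v i).card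
      = ∑ i ∈ T, ∑ u ∈ V, (V.filter fun v => u i ≠ v i).card := by
    simp_rw [Finset.card_filter]
    calc ∑ u ∈ V, ∑ v ∈ V, ∑ i ∈ T, (if u i ≠ v i then 1 else 0)
        = ∑ u ∈ V, ∑ i ∈ T, ∑ v ∈ V, (if u i ≠ v i then 1 else 0) :=
          Finset.sum_congr rfl fun u _ => Finset.sum_comm
      _ = ∑ i ∈ T, ∑ u ∈ V, ∑ v ∈ V, (if u i ≠ v i then 1 else 0) := Finset.sum_comm
  -- Step A: lower bound
  have stepA : ρ * (M * (M - 1)) ≤ ∑ u ∈ V, ∑ v ∈ V, (T.filter fun i => u i ≠ v i).card := by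
    have hrow : ∀ u ∈ V, ρ * (M - 1) ≤ ∑ v ∈ V, (T.filter fun i => u i ≠ v i).card := by
      intro u hu
      calc ρ * (M - 1) = ∑ _v ∈ V.erase u, ρ := by
            rw [Finset.sum_const, Finset.card_erase_of_mem hu, smul_eq_mul, mul_comm]
        _ ≤ ∑ v ∈ V.erase u, (T.filter fun i => u i ≠ v i).card := by
            refine Finset.sum_le_sum fun v hv => ?_
            exact hd u hu v (Finset.mem_of_mem_erase hv) (Finset.ne_of_mem_erase hv).symm
        _ ≤ ∑ v ∈ V, (T.filter fun i => u i ≠ v i).card :=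
            Finset.sum_le_sum_of_subset (Finset.erase_subset _ _)
    calc ρ * (M * (M - 1)) = ∑ _u ∈ V, ρ * (M - 1) := by
          rw [Finset.sum_const, smul_eq_mul]; ring
      _ ≤ _ := Finset.sum_le_sum hrow
  calc q * (ρ * (M * (M - 1)))
      ≤ q * ∑ i ∈ T, ∑ u ∈ V, (V.filter fun v => u i ≠ v i).card := by
        rw [← stepB]; exact Nat.mul_le_mul_left q stepA
    _ = ∑ i ∈ T, q * ∑ u ∈ V, (V.filter fun v => u i ≠ v i).card := Finset.mul_sum _ _ _
    _ ≤ ∑ _i ∈ T, (q - 1) * M ^ 2 := Finset.sum_le_sum fun i _ => hEi i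
    _ = T.card * ((q - 1) * M ^ 2) := by rw [Finset.sum_const, smul_eq_mul]

set_option maxHeartbeats 1600000 in
theorem LRC_plotkin_bound {Q : Type*} [Fintype Q] [DecidableEq Q]
    (q n k d r ρ N : ℕ) (hq : Fintype.card Q = q) (hq2 : 2 ≤ q)
    (hρ : 2 ≤ ρ) (hN : N = r + ρ - 1) (hd1 : 1 ≤ d)
    (C : Finset (Fin n → Q)) (hk : C.card = q ^ k)
    (hdist : ∀ c ∈ C, ∀ c' ∈ C, c ≠ c' →
      d ≤ (univ.filter fun i => c i ≠ c' i).card)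
    (R : Fin n → Finset (Fin n))
    (hmem : ∀ i, i ∈ R i) (hcard : ∀ i, (R i).card ≤ N)
    (hloc : ∀ i, ∀ c ∈ C, ∀ c' ∈ C, (∃ j ∈ R i, c j ≠ c' j) →
      ρ ≤ ((R i).filter fun j => c j ≠ c' j).card)
    (μ : ℕ) (hμ : μ = ⌈((n - (d - 1) : ℕ) : ℝ) / N⌉₊ + 1)
    (hP : (N : ℝ) * ((q : ℝ) - 1) / q < ρ) :
    (k : ℝ) ≤ μ * Real.logb q ((ρ : ℝ) / ((ρ : ℝ) - N * ((q : ℝ) - 1) / q)) := by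
  have hNpos : 0 < N := by omega
  have hqR : (1 : ℝ) < q := by exact_mod_cast hq2
  have hq0 : (0 : ℝ) < q := by linarith
  have hρR : (0 : ℝ) < ρ := by exact_mod_cast (by omega : 0 < ρ)
  have hqρ : (0 : ℝ) < (q : ℝ) * ρ := by positivity
  have hden : (0 : ℝ) < (q : ℝ) * ρ - N * ((q : ℝ) - 1) := by
    have := (div_lt_iff₀ hq0).1 hP
    linarith
  set L : ℝ := Real.log ((q : ℝ) * ρ) - Real.log ((q : ℝ) * ρ - N * ((q : ℝ) - 1)) with hL
  have hL0 : 0 ≤ L := by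
    have : (q : ℝ) * ρ - N * ((q : ℝ) - 1) ≤ (q : ℝ) * ρ := by
      have : (0 : ℝ) ≤ (N : ℝ) * ((q : ℝ) - 1) := mul_nonneg (Nat.cast_nonneg N) (by linarith)
      linarith
    have := Real.log_le_log hden this
    linarith
  -- key induction
  have key : ∀ (b : ℕ) (C' : Finset (Fin n → Q)), C'.card ≤ b → C' ⊆ C →
      ∀ S : Finset (Fin n), (∀ c ∈ C', ∀ c' ∈ C', ∀ i ∈ S, c i = c' i) →
      Real.log C'.card * N ≤ max 0 ((n : ℝ) + N - d - S.card) * L := by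
    intro b
    induction b with
    | zero =>
      intro C' hb _ S _
      have h0 : C'.card = 0 := Nat.le_zero.1 hb
      rw [h0]
      simp only [Nat.cast_zero, Real.log_zero, zero_mul]
      exact mul_nonneg (le_max_left _ _) hL0
    | succ b ih =>
      intro C' hb hC'C S hagree
      by_cases h2 : C'.card ≤ 1
      · rcases Nat.le_one_iff_eq_zero_or_eq_one.1 h2 with h | h <;> rw [h] <;>
          simp only [Nat.cast_zero, Nat.cast_one, Real.log_zero, Real.log_one, zero_mul] <;>
          exact mul_nonneg (le_max_left _ _) hL0
      · push_neg at h2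
        obtain ⟨c1, hc1, c2, hc2, hc12⟩ := Finset.one_lt_card.1 h2
        obtain ⟨j, hj⟩ := Function.ne_iff.1 hc12
        have hjS : j ∉ S := fun hjS => hj (hagree c1 hc1 c2 hc2 j hjS)
        set T : Finset (Fin n) := R j \ S with hT
        have hjT : j ∈ T := Finset.mem_sdiff.2 ⟨hmem j, hjS⟩
        have hTR : T ⊆ R j := Finset.sdiff_subset
        set m := T.card with hm
        have hm1 : 1 ≤ m := Finset.card_pos.2 ⟨j, hjT⟩
        have hmN : m ≤ N := le_trans (Finset.card_le_card hTR) (hcard j)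
        set g : (Fin n → Q) → (Fin n → Q) := fun c i => if i ∈ T then c i else c1 i with hg
        set V := C'.image g with hV
        have hgT : ∀ c : Fin n → Q, ∀ i ∈ T, g c i = c i := fun c i hi => if_pos hi
        have hgNT : ∀ (c : Fin n → Q) (i : Fin n), i ∉ T → g c i = c1 i :=
          fun c i hi => if_neg hi
        have hdT : ∀ u ∈ V, ∀ v ∈ V, u ≠ v → ρ ≤ (T.filter fun i => u i ≠ v i).card := by
          intro u hu v hv huv
          obtain ⟨cu, hcu, rfl⟩ := Finset.mem_image.1 hu
          obtain ⟨cv, hcv, rfl⟩ := Finset.mem_image.1 hv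
          obtain ⟨i0, hi0⟩ := Function.ne_iff.1 huv
          have hi0T : i0 ∈ T := by
            by_contra hi0T
            exact hi0 (by rw [hgNT cu i0 hi0T, hgNT cv i0 hi0T])
          have hcune : cu i0 ≠ cv i0 := by rwa [hgT cu i0 hi0T, hgT cv i0 hi0T] at hi0
          have hρle := hloc j cu (hC'C hcu) cv (hC'C hcv) ⟨i0, hTR hi0T, hcune⟩
          refine le_trans hρle (Finset.card_le_card ?_)
          intro i hi
          obtain ⟨hiR, hine⟩ := Finset.mem_filter.1 hi
          have hiS : i ∉ S := fun hiS => hine (hagree cu hcu cv hcv i hiS)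
          have hiT : i ∈ T := Finset.mem_sdiff.2 ⟨hiR, hiS⟩
          exact Finset.mem_filter.2 ⟨hiT, by rw [hgT cu i hiT, hgT cv i hiT]; exact hine⟩
        have hgc12 : g c1 ≠ g c2 := by
          intro h
          have h' := congrFun h j
          rw [hgT c1 j hjT, hgT c2 j hjT] at h'
          exact hj h'
        have hmden : (0 : ℝ) < (q : ℝ) * ρ - m * ((q : ℝ) - 1) := by
          have hmc : (m : ℝ) ≤ N := by exact_mod_cast hmN
          nlinarith
        have hVpos : 0 < V.card := Finset.card_pos.2 ⟨g c1, Finset.mem_image_of_mem g hc1⟩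
        have hV1R : (1 : ℝ) ≤ V.card := by exact_mod_cast hVpos
        have plotkinR : (V.card : ℝ) * ((q : ℝ) * ρ - m * ((q : ℝ) - 1)) ≤ (q : ℝ) * ρ := by
          have hnat := plotkin_count hq T V hdT
          have hc : ((q * (ρ * (V.card * (V.card - 1))) : ℕ) : ℝ)
              ≤ ((T.card * ((q - 1) * V.card ^ 2) : ℕ) : ℝ) := Nat.cast_le.2 hnat
          push_cast [Nat.cast_sub (by omega : 1 ≤ q), Nat.cast_sub hVpos] at hc
          nlinarith [hc, hV1R]
        have logV : Real.log V.card * N ≤ m * L := by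
          have hVle : (V.card : ℝ) ≤ ((q : ℝ) * ρ) / ((q : ℝ) * ρ - m * ((q : ℝ) - 1)) :=
            (le_div_iff₀ hmden).2 plotkinR
          have h2' : Real.log V.card
              ≤ Real.log ((q : ℝ) * ρ) - Real.log ((q : ℝ) * ρ - m * ((q : ℝ) - 1)) := by
            rw [← Real.log_div (ne_of_gt hqρ) (ne_of_gt hmden)]
            exact Real.log_le_log (by exact_mod_cast hVpos) hVle
          set t : ℝ := (m : ℝ) / (N : ℝ) with ht
          have hNR : (0 : ℝ) < N := by exact_mod_cast hNpos
          have ht0 : 0 ≤ t := by positivity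
          have ht1 : t ≤ 1 := by rw [ht, div_le_one hNR]; exact_mod_cast hmN
          have hcomb : t * ((q : ℝ) * ρ - N * ((q : ℝ) - 1)) + (1 - t) * ((q : ℝ) * ρ)
              = (q : ℝ) * ρ - m * ((q : ℝ) - 1) := by
            rw [ht]; field_simp; ring
          have ht1' : (0 : ℝ) ≤ 1 - t := by linarith
          have hconc := (strictConcaveOn_log_Ioi.concaveOn).2 (Set.mem_Ioi.2 hden)
            (Set.mem_Ioi.2 hqρ) ht0 ht1' (by ring)
          simp only [smul_eq_mul] at hconc
          rw [hcomb] at hconc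
          have hfin : Real.log V.card ≤ t * L := by
            rw [hL]
            nlinarith [hconc, h2']
          calc Real.log V.card * N ≤ (t * L) * N :=
              mul_le_mul_of_nonneg_right hfin (le_of_lt hNR)
            _ = m * L := by rw [ht]; field_simp
        obtain ⟨v0, hv0V, hv0max⟩ := Finset.exists_max_image V
          (fun v => (C'.filter fun c => g c = v).card)
          ⟨g c1, Finset.mem_image_of_mem g hc1⟩
        set C'' := C'.filter (fun c => g c = v0) with hC''
        have hfibcard : C'.card ≤ V.card * C''.card := by
          rw [Finset.card_eq_sum_card_fiberwise
            (fun x hx => Finset.mem_image_of_mem g hx : ∀ x ∈ C', g x ∈ V)]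
          calc ∑ v ∈ V, (C'.filter fun c => g c = v).card ≤ ∑ _v ∈ V, C''.card :=
              Finset.sum_le_sum fun v hv => hv0max v hv
            _ = V.card * C''.card := by rw [Finset.sum_const, smul_eq_mul]
        obtain ⟨cv0, hcv0, hgcv0⟩ := Finset.mem_image.1 hv0V
        have hC''pos : 0 < C''.card :=
          Finset.card_pos.2 ⟨cv0, Finset.mem_filter.2 ⟨hcv0, hgcv0⟩⟩
        have hC''ssub : C'' ⊂ C' := by
          rw [hC'', Finset.filter_ssubset]
          by_cases h : g c1 = v0
          · exact ⟨c2, hc2, by rw [← h]; exact fun e => hgc12 e.symm⟩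
          · exact ⟨c1, hc1, h⟩
        have hC''lt : C''.card < C'.card := Finset.card_lt_card hC''ssub
        have hagree'' : ∀ c ∈ C'', ∀ c' ∈ C'', ∀ i ∈ S ∪ T, c i = c' i := by
          intro c hc c' hc' i hi
          obtain ⟨hcC', hgc⟩ := Finset.mem_filter.1 hc
          obtain ⟨hc'C', hgc'⟩ := Finset.mem_filter.1 hc'
          rcases Finset.mem_union.1 hi with hiS | hiT
          · exact hagree c hcC' c' hc'C' i hiS
          · have h' := congrFun (hgc.trans hgc'.symm) i
            rwa [hgT c i hiT, hgT c' i hiT] at h'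
        have ihapp := ih C'' (by omega)
          (fun x hx => hC'C (Finset.filter_subset _ _ hx)) (S ∪ T) hagree''
        have hdisj : Disjoint S T := by
          rw [hT]; exact Finset.sdiff_disjoint.symm
        have hSTcard : (((S ∪ T).card : ℕ) : ℝ) = (S.card : ℝ) + m := by
          rw [Finset.card_union_of_disjoint hdisj]
          push_cast
          rw [hm]
        have hdSbound : (d : ℝ) ≤ (n : ℝ) - S.card := by
          have hsub : (univ.filter fun i => c1 i ≠ c2 i) ⊆ univ \ S := by
            intro i hi
            refine Finset.mem_sdiff.2 ⟨Finset.mem_univ i, fun hiS => ?_⟩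
            exact (Finset.mem_filter.1 hi).2 (hagree c1 hc1 c2 hc2 i hiS)
          have h1 := hdist c1 (hC'C hc1) c2 (hC'C hc2) hc12
          have h2' : (univ \ S).card = n - S.card := by
            rw [Finset.card_sdiff_of_subset (Finset.subset_univ S), Finset.card_univ, Fintype.card_fin]
          have h3 : d ≤ n - S.card :=
            le_trans h1 (le_trans (Finset.card_le_card hsub) (le_of_eq h2'))
          have hSn : S.card ≤ n := by
            have := Finset.card_le_card (Finset.subset_univ S)
            rwa [Finset.card_univ, Fintype.card_fin] at this
          have h4 := (Nat.cast_le (α := ℝ)).2 h3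
          rwa [Nat.cast_sub hSn] at h4
        set X : ℝ := (n : ℝ) + N - d - S.card with hX
        have hNX : (N : ℝ) ≤ X := by rw [hX]; linarith
        have hmX : (m : ℝ) ≤ X := le_trans (by exact_mod_cast hmN) hNX
        have hmaxX : max 0 X = X := max_eq_right (le_trans (by positivity) hNX)
        have hmaxX' : max 0 ((n : ℝ) + N - d - (((S ∪ T).card : ℕ) : ℝ)) = X - m := by
          rw [hSTcard, show (n : ℝ) + N - d - ((S.card : ℝ) + m) = X - m by rw [hX]; ring]
          exact max_eq_right (by linarith)
        rw [hmaxX'] at ihapp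
        have hlogsplit : Real.log C'.card ≤ Real.log V.card + Real.log C''.card := by
          have h1 : (C'.card : ℝ) ≤ (V.card : ℝ) * C''.card := by exact_mod_cast hfibcard
          have h2' : Real.log C'.card ≤ Real.log ((V.card : ℝ) * C''.card) :=
            Real.log_le_log (by exact_mod_cast (by omega : 0 < C'.card)) h1
          rwa [Real.log_mul (ne_of_gt (by exact_mod_cast hVpos))
            (ne_of_gt (by exact_mod_cast hC''pos))] at h2'
        rw [hmaxX]
        have hNR0 : (0 : ℝ) ≤ N := Nat.cast_nonneg N
        calc Real.log C'.card * N ≤ (Real.log V.card + Real.log C''.card) * N :=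
            mul_le_mul_of_nonneg_right hlogsplit hNR0
          _ = Real.log V.card * N + Real.log C''.card * N := by ring
          _ ≤ m * L + (X - m) * L := add_le_add logV ihapp
          _ = X * L := by ring
  have hkey := key C.card C le_rfl (fun x hx => hx) ∅ (by simp)
  have hlogqk : Real.log ((C.card : ℕ) : ℝ) = (k : ℝ) * Real.log q := by
    rw [hk]; push_cast; rw [Real.log_pow]
  rw [hlogqk] at hkey
  have hμ1 : 1 ≤ μ := by rw [hμ]; omega
  have hNR : (0 : ℝ) < N := by exact_mod_cast hNpos
  have hmaxle : max 0 ((n : ℝ) + N - d - (((∅ : Finset (Fin n)).card : ℕ) : ℝ))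
      ≤ (μ : ℝ) * N := by
    simp only [Finset.card_empty, Nat.cast_zero, sub_zero]
    have hμN0 : (0 : ℝ) ≤ (μ : ℝ) * N := by positivity
    refine max_le hμN0 ?_
    rcases le_or_gt d n with hdn | hdn
    · have hc1 : ((n - (d - 1) : ℕ) : ℝ) = (n : ℝ) - d + 1 := by
        rw [Nat.cast_sub (by omega), Nat.cast_sub hd1]; push_cast; ring
      have hceil : ((n : ℝ) - d + 1) / N ≤ (⌈((n - (d - 1) : ℕ) : ℝ) / N⌉₊ : ℝ) := by
        rw [← hc1]; exact Nat.le_ceil _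
      have hμeq : (μ : ℝ) = (⌈((n - (d - 1) : ℕ) : ℝ) / N⌉₊ : ℝ) + 1 := by
        rw [hμ]; push_cast; ring
      have hceil' : ((n : ℝ) - d + 1) / N + 1 ≤ (μ : ℝ) := by rw [hμeq]; linarith
      have h5 : ((n : ℝ) - d + 1) / N * N = (n : ℝ) - d + 1 :=
        div_mul_cancel₀ _ (ne_of_gt hNR)
      have h6 := mul_le_mul_of_nonneg_right hceil' (le_of_lt hNR)
      rw [add_mul, h5, one_mul] at h6
      linarith
    · have hdn2 : n + 1 ≤ d := hdn
      have hdn' : (n : ℝ) + 1 ≤ d := by exact_mod_cast hdn2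
      have hμR : (1 : ℝ) ≤ μ := Nat.one_le_cast.2 hμ1
      have h6 := mul_le_mul_of_nonneg_right hμR (le_of_lt hNR)
      rw [one_mul] at h6
      linarith
  have hklogq : (k : ℝ) * Real.log q * N ≤ ((μ : ℝ) * L) * N :=
    le_trans hkey (by
      rw [show ((μ : ℝ) * L) * N = ((μ : ℝ) * N) * L by ring]
      exact mul_le_mul_of_nonneg_right hmaxle hL0)
  have hklq : (k : ℝ) * Real.log q ≤ (μ : ℝ) * L := le_of_mul_le_mul_right hklogq hNR
  have hlogq : 0 < Real.log q := Real.log_pos hqR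
  have hd2 : (0 : ℝ) < (ρ : ℝ) - N * ((q : ℝ) - 1) / q := by linarith [hP]
  have hBeq : (ρ : ℝ) / ((ρ : ℝ) - N * ((q : ℝ) - 1) / q)
      = ((q : ℝ) * ρ) / ((q : ℝ) * ρ - N * ((q : ℝ) - 1)) := by
    have hz1 : ((q : ℝ)) ≠ 0 := ne_of_gt hq0
    have hz2 : (ρ : ℝ) - N * ((q : ℝ) - 1) / q ≠ 0 := ne_of_gt hd2
    have hz3 : (q : ℝ) * ρ - N * ((q : ℝ) - 1) ≠ 0 := ne_of_gt hden
    rw [div_eq_div_iff hz2 hz3]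
    field_simp
  have hlogB : Real.log ((ρ : ℝ) / ((ρ : ℝ) - N * ((q : ℝ) - 1) / q)) = L := by
    rw [hBeq, Real.log_div (ne_of_gt hqρ) (ne_of_gt hden), hL]
  rw [Real.logb, hlogB, show (μ : ℝ) * (L / Real.log q) = ((μ : ℝ) * L) / Real.log q by ring,
    le_div_iff₀ hlogq]
  exact hklq
end

section
/- Let C be a q-ary (n,k,r,ρ) LRC code with distance d, N = r+ρ-1, and μ = ⌈(n-(d-1))/N⌉ + 1. Then k ≤ μ·r. -/
open Finset

private def LRCres {Q : Type*} (d0 : Q) {n : ℕ} (U : Finset (Fin n)) (c : Fin n → Q) :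
    Fin n → Q :=
  fun j => if j ∈ U then c j else d0

private lemma LRC_count {Q : Type*} [Fintype Q] [DecidableEq Q] (d0 : Q) {n : ℕ}
    (C : Finset (Fin n → Q)) (T : Finset (Fin n)) :
    (C.image (LRCres d0 T)).card ≤ Fintype.card Q ^ T.card := by
  classical
  have h1 : (C.image (LRCres d0 T)).card ≤ (Finset.univ : Finset (↥T → Q)).card := by
    apply Finset.card_le_card_of_injOn (fun v (j : ↥T) => v j.1)
    · intro v _; exact mem_univ _
    · intro v hv w hw hvw
      obtain ⟨c, _, rfl⟩ := Finset.mem_image.mp hv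
      obtain ⟨c', _, rfl⟩ := Finset.mem_image.mp hw
      funext j
      by_cases hj : j ∈ T
      · exact congrFun hvw ⟨j, hj⟩
      · simp [LRCres, hj]
  simpa [Finset.card_univ, Fintype.card_fun, Fintype.card_coe] using h1

private lemma LRC_step {Q : Type*} [Fintype Q] [DecidableEq Q] (d0 : Q) {n q ρ : ℕ}
    (hq : Fintype.card Q = q) (hρ : 2 ≤ ρ)
    (C : Finset (Fin n → Q)) (Ri : Finset (Fin n))
    (hloc : ∀ c ∈ C, ∀ c' ∈ C, (∃ j ∈ Ri, c j ≠ c' j) →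
      ρ ≤ (Ri.filter fun j => c j ≠ c' j).card)
    (U : Finset (Fin n)) :
    (C.image (LRCres d0 (U ∪ Ri))).card ≤
      (C.image (LRCres d0 U)).card * q ^ ((Ri \ U).card - (ρ - 1)) := by
  classical
  obtain ⟨T, hTsub, hTcard⟩ :=
    Finset.exists_subset_card_eq (Nat.sub_le (Ri \ U).card (ρ - 1))
  have key : (C.image (LRCres d0 (U ∪ Ri))).card ≤
      ((C.image (LRCres d0 U)) ×ˢ (C.image (LRCres d0 T))).card := by
    apply Finset.card_le_card_of_injOn (fun v => (LRCres d0 U v, LRCres d0 T v))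
    · rintro v hv
      obtain ⟨c, hc, rfl⟩ := Finset.mem_image.mp hv
      refine Finset.mem_product.mpr ⟨?_, ?_⟩
      · refine Finset.mem_image.mpr ⟨c, hc, ?_⟩
        funext j
        by_cases hj : j ∈ U <;> simp [LRCres, hj]
      · refine Finset.mem_image.mpr ⟨c, hc, ?_⟩
        funext j
        by_cases hj : j ∈ T
        · have hj' := hTsub hj
          rw [Finset.mem_sdiff] at hj'
          simp [LRCres, hj, hj'.1]
        · simp [LRCres, hj]
    · intro v hv w hw hvw
      obtain ⟨c, hc, rfl⟩ := Finset.mem_image.mp hv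
      obtain ⟨c', hc', rfl⟩ := Finset.mem_image.mp hw
      rw [Prod.mk.injEq] at hvw
      obtain ⟨h1, h2⟩ := hvw
      have hU : ∀ j ∈ U, c j = c' j := by
        intro j hj
        have := congrFun h1 j
        simpa [LRCres, hj, Finset.mem_union] using this
      have hT : ∀ j ∈ T, c j = c' j := by
        intro j hj
        have hj' := hTsub hj
        rw [Finset.mem_sdiff] at hj'
        have := congrFun h2 j
        simpa [LRCres, hj, hj'.1, Finset.mem_union] using this
      have hall : ∀ j ∈ U ∪ Ri, c j = c' j := by
        by_contra hcon
        push_neg at hcon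
        obtain ⟨j0, hj0, hj0ne⟩ := hcon
        have hex : ∃ j ∈ Ri, c j ≠ c' j := by
          refine ⟨j0, ?_, hj0ne⟩
          rcases Finset.mem_union.mp hj0 with h | h
          · exact absurd (hU j0 h) hj0ne
          · exact h
        have hge := hloc c hc c' hc' hex
        have hsub2 : (Ri.filter fun j => c j ≠ c' j) ⊆ (Ri \ U) \ T := by
          intro j hj
          rw [Finset.mem_filter] at hj
          rw [Finset.mem_sdiff, Finset.mem_sdiff]
          refine ⟨⟨hj.1, fun hjU => hj.2 (hU j hjU)⟩, fun hjT => hj.2 (hT j hjT)⟩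
        have hle := Finset.card_le_card hsub2
        rw [Finset.card_sdiff_of_subset hTsub, hTcard] at hle
        omega
      funext j
      by_cases hj : j ∈ U ∪ Ri <;> simp [LRCres, hj, hall]
  rw [Finset.card_product] at key
  calc (C.image (LRCres d0 (U ∪ Ri))).card
      ≤ (C.image (LRCres d0 U)).card * (C.image (LRCres d0 T)).card := key
    _ ≤ (C.image (LRCres d0 U)).card * q ^ ((Ri \ U).card - (ρ - 1)) := by
        refine Nat.mul_le_mul le_rfl ?_
        have := LRC_count d0 C T
        rwa [hq, hTcard] at this

private lemma LRC_main {Q : Type*} [Fintype Q] [DecidableEq Q] (d0 : Q)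
    {q n r ρ N : ℕ} (d : ℕ) (hρ : 2 ≤ ρ) (hN : N = r + ρ - 1)
    (C : Finset (Fin n → Q)) (hq : Fintype.card Q = q)
    (R : Fin n → Finset (Fin n)) (hmem : ∀ i, i ∈ R i) (hcard : ∀ i, (R i).card ≤ N)
    (hloc : ∀ i, ∀ c ∈ C, ∀ c' ∈ C, (∃ j ∈ R i, c j ≠ c' j) →
      ρ ≤ ((R i).filter fun j => c j ≠ c' j).card) :
    ∀ t : ℕ, ∀ U : Finset (Fin n), Uᶜ.card ≤ t →
      ∃ V : Finset (Fin n), ∃ m e : ℕ,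
        (C.image (LRCres d0 V)).card ≤ (C.image (LRCres d0 U)).card * q ^ e ∧
        e ≤ m * r ∧
        e + m * (ρ - 1) + U.card ≤ V.card ∧
        n - (d - 1) ≤ V.card ∧
        (V.card ≤ U.card ∨ V.card ≤ (n - (d - 1)) - 1 + N) := by
  classical
  intro t
  induction t with
  | zero =>
    intro U hU
    have hUuniv : U = Finset.univ := by
      have : Uᶜ = ∅ := Finset.card_eq_zero.mp (Nat.le_zero.mp hU)
      rwa [Finset.compl_eq_empty_iff] at this
    refine ⟨U, 0, 0, by simp, Nat.zero_le _, by simp, ?_, Or.inl le_rfl⟩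
    rw [hUuniv, Finset.card_univ, Fintype.card_fin]
    omega
  | succ t ih =>
    intro U hU
    by_cases hstop : n - (d - 1) ≤ U.card
    · exact ⟨U, 0, 0, by simp, Nat.zero_le _, by simp, hstop, Or.inl le_rfl⟩
    · have hUn : U.card ≤ n := by
        have := Finset.card_le_univ U
        rwa [Fintype.card_fin] at this
      have hUlt : U.card < n := by omega
      have hne : Uᶜ.Nonempty := by
        rw [← Finset.card_pos, Finset.card_compl, Fintype.card_fin]
        omega
      obtain ⟨i, hi⟩ := hne
      rw [Finset.mem_compl] at hi
      have hiU' : i ∈ U ∪ R i := Finset.mem_union.mpr (Or.inr (hmem i))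
      have hssub : U ⊂ U ∪ R i :=
        (Finset.ssubset_iff_of_subset Finset.subset_union_left).mpr ⟨i, hiU', hi⟩
      have hcards : U.card < (U ∪ R i).card := Finset.card_lt_card hssub
      have hUn' : (U ∪ R i).card ≤ n := by
        have := Finset.card_le_univ (U ∪ R i)
        rwa [Fintype.card_fin] at this
      have hU'c : (U ∪ R i)ᶜ.card ≤ t := by
        rw [Finset.card_compl, Fintype.card_fin]
        rw [Finset.card_compl, Fintype.card_fin] at hU
        omega
      obtain ⟨V, m, e, hVle, hem, hsum, hcov, hdisj⟩ := ih (U ∪ R i) hU'c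
      have hstep := LRC_step d0 hq hρ C (R i) (hloc i) U
      set a := (R i \ U).card with ha
      have hcardU' : (U ∪ R i).card = U.card + a := by
        have h := Finset.card_sdiff_add_card (R i) U
        rw [Finset.union_comm] at h
        omega
      have haN : a ≤ N := le_trans (Finset.card_le_card (Finset.sdiff_subset)) (hcard i)
      have ha1 : 1 ≤ a := by
        have : (R i \ U).Nonempty := ⟨i, Finset.mem_sdiff.mpr ⟨hmem i, hi⟩⟩
        have := Finset.card_pos.mpr this
        omega
      set b := a - (ρ - 1) with hb
      have hdisj' : V.card ≤ (n - (d - 1)) - 1 + N := by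
        rcases hdisj with h | h
        · omega
        · exact h
      have hchain : (C.image (LRCres d0 V)).card ≤
          (C.image (LRCres d0 U)).card * q ^ (e + b) := by
        calc (C.image (LRCres d0 V)).card
            ≤ (C.image (LRCres d0 (U ∪ R i))).card * q ^ e := hVle
          _ ≤ ((C.image (LRCres d0 U)).card * q ^ b) * q ^ e :=
              Nat.mul_le_mul hstep le_rfl
          _ = (C.image (LRCres d0 U)).card * q ^ (e + b) := by
              rw [mul_assoc, ← pow_add, Nat.add_comm b e]
      by_cases hb0 : b = 0
      · refine ⟨V, m, e, ?_, hem, ?_, hcov, Or.inr hdisj'⟩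
        · simpa [hb0] using hchain
        · omega
      · refine ⟨V, m + 1, e + b, hchain, ?_, ?_, hcov, Or.inr hdisj'⟩
        · have h1 : (m + 1) * r = m * r + r := by ring
          omega
        · have h2 : (m + 1) * (ρ - 1) = m * (ρ - 1) + (ρ - 1) := by ring
          omega

theorem LRC_singleton_bound {Q : Type*} [Fintype Q] [DecidableEq Q]
    (q n k d r ρ N : ℕ) (hq : Fintype.card Q = q) (hq2 : 2 ≤ q)
    (hρ : 2 ≤ ρ) (hN : N = r + ρ - 1) (hd1 : 1 ≤ d)
    (C : Finset (Fin n → Q)) (hk : C.card = q ^ k)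
    (hdist : ∀ c ∈ C, ∀ c' ∈ C, c ≠ c' →
      d ≤ (univ.filter fun i => c i ≠ c' i).card)
    (R : Fin n → Finset (Fin n))
    (hmem : ∀ i, i ∈ R i) (hcard : ∀ i, (R i).card ≤ N)
    (hloc : ∀ i, ∀ c ∈ C, ∀ c' ∈ C, (∃ j ∈ R i, c j ≠ c' j) →
      ρ ≤ ((R i).filter fun j => c j ≠ c' j).card)
    (μ : ℕ) (hμ : μ = ⌈((n - (d - 1) : ℕ) : ℝ) / N⌉₊ + 1) :
    k ≤ μ * r := by
  classical
  have hQ : Nonempty Q := by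
    rw [← Fintype.card_pos_iff, hq]; omega
  obtain ⟨d0⟩ := hQ
  have hemptyc : (∅ : Finset (Fin n))ᶜ.card ≤ n := by
    refine le_trans (Finset.card_le_univ _) ?_
    rw [Fintype.card_fin]
  obtain ⟨V, m, e, hVle, hem, hsum, hcov, hdisj⟩ :=
    LRC_main d0 d hρ hN C hq R hmem hcard hloc n ∅ hemptyc
  -- injectivity of restriction to V
  have hVn : V.card ≤ n := by
    have := Finset.card_le_univ V
    rwa [Fintype.card_fin] at this
  have hinj : Set.InjOn (LRCres d0 V) C := by
    intro c hc c' hc' hcc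
    by_contra hne
    have hd := hdist c hc c' hc' hne
    have hsub : (univ.filter fun i => c i ≠ c' i) ⊆ Vᶜ := by
      intro j hj
      rw [Finset.mem_filter] at hj
      rw [Finset.mem_compl]
      intro hjV
      exact hj.2 (by have := congrFun hcc j; simpa [LRCres, hjV] using this)
    have h2 := Finset.card_le_card hsub
    rw [Finset.card_compl, Fintype.card_fin] at h2
    omega
  have hCV : C.card = (C.image (LRCres d0 V)).card :=
    (Finset.card_image_of_injOn hinj).symm
  have hempty1 : (C.image (LRCres d0 (∅ : Finset (Fin n)))).card ≤ 1 := by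
    apply Finset.card_le_one.mpr
    intro x hx y hy
    obtain ⟨c, _, rfl⟩ := Finset.mem_image.mp hx
    obtain ⟨c', _, rfl⟩ := Finset.mem_image.mp hy
    funext j; simp [LRCres]
  have hqk : q ^ k ≤ q ^ e := by
    calc q ^ k = C.card := hk.symm
      _ = (C.image (LRCres d0 V)).card := hCV
      _ ≤ (C.image (LRCres d0 (∅ : Finset (Fin n)))).card * q ^ e := hVle
      _ ≤ 1 * q ^ e := Nat.mul_le_mul hempty1 le_rfl
      _ = q ^ e := one_mul _
  have hke : k ≤ e := by
    have h1q : 1 < q := by omega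
    exact (Nat.pow_le_pow_iff_right h1q).mp hqk
  -- final arithmetic
  set L := n - (d - 1) with hL
  set cc := ⌈(L : ℝ) / N⌉₊ with hcc
  have hN1 : 1 ≤ N := by omega
  have hceil : L ≤ cc * N := by
    have h := Nat.le_ceil ((L : ℝ) / N)
    have hNpos : (0 : ℝ) < N := by exact_mod_cast hN1
    rw [div_le_iff₀ hNpos] at h
    exact_mod_cast h
  have hμc : μ = cc + 1 := hμ
  by_cases hm : m ≤ μ
  · calc k ≤ e := hke
      _ ≤ m * r := hem
      _ ≤ μ * r := Nat.mul_le_mul hm le_rfl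
  · rcases hdisj with h | h
    · simp only [Finset.card_empty] at h
      omega
    · have h1 : (μ + 1) * (ρ - 1) ≤ m * (ρ - 1) := Nat.mul_le_mul (by omega) le_rfl
      have h2 : (μ + 1) * (ρ - 1) = μ * (ρ - 1) + (ρ - 1) := by ring
      have h3 : μ * N = μ * r + μ * (ρ - 1) := by
        have hNr : N = r + (ρ - 1) := by omega
        rw [hNr, Nat.mul_add]
      have h4 : μ * N = cc * N + N := by rw [hμc]; ring
      simp only [Finset.card_empty, Nat.add_zero] at hsum
      omega
end

section
/- With M₂(ℓ, d) denoting the maximal size of a binary code of length ℓ and minimum distance d, the function ℓ ↦ M₂(ℓ, 4) is not log-convex: M₂(8,4)^2 > M₂(7,4)·M₂(9,4). Concretely, M₂(7,4)=8, M₂(8,4)=16, M₂(9,4)=20. -/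
/-!
Map words to `±1` vectors. For a code `D`, the pairwise correlations `n - 2 d(x, y)` sum to
`∑ᵢ (∑ₓ xᵢ)²` and their squares sum to `∑ᵢ ∑ⱼ (∑ₓ xᵢ xⱼ)²`; when `#D` is odd every inner sum is
odd, so each square is at least `1`. Confronting the first identity with the distance condition
is Plotkin's bound `M₂(7,4) ≤ 8`. Applying both to `e² + 2e` on the parity extension of a code
of length 8 and distance 3 (an even-weight code of length 9 in which a word has at most one other
word at distance 8) gives `M₂(8,3) ≤ 20`. Shortening gives
`M₂(8,4) ≤ 2 M₂(7,4)`, puncturing `M₂(9,4) ≤ M₂(8,3)`, and explicit codes attain 8, 16 and 20.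
-/

open Finset

def isBinCode (ℓ d : ℕ) (C : Finset (Fin ℓ → Bool)) : Prop :=
  ∀ c ∈ C, ∀ c' ∈ C, c ≠ c' → d ≤ hammingDist c c'

noncomputable def M2 (ℓ d : ℕ) : ℕ :=
  sSup {M | ∃ C : Finset (Fin ℓ → Bool), isBinCode ℓ d C ∧ C.card = M}

section HammingDist

variable {n : ℕ}

lemma hammingDist_compl_add_hammingDist (x y : Fin n → Bool) :
    hammingDist xᶜ y + hammingDist x y = n := by
  have h : #{i | xᶜ i ≠ y i} = #{i | ¬ x i ≠ y i} :=
    congrArg card <| filter_congr fun i _ => by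
      rw [Pi.compl_apply]; cases x i <;> cases y i <;> decide
  rw [hammingDist, hammingDist, h, add_comm, card_filter_add_card_filter_not, card_univ,
    Fintype.card_fin]

lemma hammingDist_eq_hammingDist_init_add (x y : Fin (n + 1) → Bool) :
    hammingDist x y =
      hammingDist (Fin.init x) (Fin.init y) + if x (Fin.last n) ≠ y (Fin.last n) then 1 else 0 := by
  rw [hammingDist, hammingDist, card_filter, card_filter, Fin.sum_univ_castSucc]
  rfl

def weight (x : Fin n → Bool) : ℕ := #{i | x i}

lemma hammingDist_add_two_mul (x y : Fin n → Bool) :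
    hammingDist x y + 2 * #{i | x i && y i} = weight x + weight y := by
  simp only [hammingDist, weight, card_filter, mul_sum, ← sum_add_distrib]
  exact sum_congr rfl fun i _ => by cases x i <;> cases y i <;> rfl

lemma even_hammingDist {x y : Fin n → Bool} (hx : Even (weight x)) (hy : Even (weight y)) :
    Even (hammingDist x y) := by
  have := hammingDist_add_two_mul x y
  rw [Nat.even_iff] at *
  omega

def parityExtend (x : Fin n → Bool) : Fin (n + 1) → Bool :=
  Fin.snoc x (decide (Odd (weight x)))

lemma init_parityExtend (x : Fin n → Bool) : Fin.init (parityExtend x) = x :=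
  Fin.init_snoc _ _

lemma parityExtend_injective : Function.Injective (parityExtend (n := n)) :=
  Function.LeftInverse.injective init_parityExtend

lemma even_weight_parityExtend (x : Fin n → Bool) : Even (weight (parityExtend x)) := by
  have h : weight (parityExtend x) = weight x + if Odd (weight x) then 1 else 0 := by
    simp only [weight, parityExtend, card_filter, Fin.sum_univ_castSucc, Fin.snoc_castSucc,
      Fin.snoc_last, decide_eq_true_eq]
  rw [h]
  split_ifs with ho
  · exact ho.add_one
  · exact Nat.not_odd_iff_even.mp ho

lemma hammingDist_le_hammingDist_parityExtend (x y : Fin n → Bool) :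
    hammingDist x y ≤ hammingDist (parityExtend x) (parityExtend y) := by
  rw [hammingDist_eq_hammingDist_init_add, init_parityExtend, init_parityExtend]
  exact Nat.le_add_right _ _

end HammingDist

section Correlation

def toSign (b : Bool) : ℤ := if b then -1 else 1

lemma toSign_mul_toSign (a b : Bool) : toSign a * toSign b = toSign (a ^^ b) := by
  cases a <;> cases b <;> rfl

lemma sum_toSign {α : Type*} (s : Finset α) (f : α → Bool) :
    ∑ x ∈ s, toSign (f x) = #s - 2 * #{x ∈ s | f x} := by
  have h : ∀ b, toSign b = 1 - 2 * if b then 1 else 0 := by decide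
  simp only [h, sum_sub_distrib, ← mul_sum, sum_boole, sum_const, nsmul_one]

lemma one_le_sq_sum_toSign {α : Type*} {s : Finset α} (hs : Odd #s) (f : α → Bool) :
    1 ≤ (∑ x ∈ s, toSign (f x)) ^ 2 := by
  have hodd : Odd (∑ x ∈ s, toSign (f x)) := by
    rw [sum_toSign]
    exact (Int.odd_coe_nat _ |>.mpr hs).sub_even (even_two_mul _)
  have hne : ∑ x ∈ s, toSign (f x) ≠ 0 := by
    rintro h
    simp [h] at hodd
  exact (one_le_sq_iff_one_le_abs _).mpr (Int.one_le_abs hne)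

variable {n : ℕ}

def correlation (x y : Fin n → Bool) : ℤ := ∑ i, toSign (x i) * toSign (y i)

lemma correlation_eq (x y : Fin n → Bool) : correlation x y = n - 2 * hammingDist x y := by
  simp only [correlation, toSign_mul_toSign, sum_toSign, card_univ, Fintype.card_fin, hammingDist,
    Bool.xor_iff_ne]

variable (D : Finset (Fin n → Bool))

lemma sum_sum_correlation :
    ∑ x ∈ D, ∑ y ∈ D, correlation x y = ∑ i, (∑ x ∈ D, toSign (x i)) ^ 2 := by
  simp only [correlation, sq, sum_mul_sum]
  rw [sum_comm_cycle]

lemma sum_sum_correlation_sq :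
    ∑ x ∈ D, ∑ y ∈ D, correlation x y ^ 2 =
      ∑ i, ∑ j, (∑ x ∈ D, toSign (x i) * toSign (x j)) ^ 2 := by
  simp only [correlation, sq, sum_mul_sum]
  simp_rw [Finset.sum_comm (s := D) (t := (univ : Finset (Fin n)))]
  exact sum_congr rfl fun i _ => sum_congr rfl fun j _ =>
    sum_congr rfl fun x _ => sum_congr rfl fun y _ => by ring

variable {D}

lemma le_sum_sum_correlation (hD : Odd #D) : (n : ℤ) ≤ ∑ x ∈ D, ∑ y ∈ D, correlation x y := by
  rw [sum_sum_correlation]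
  calc (n : ℤ) = ∑ _i : Fin n, 1 := by simp
    _ ≤ _ := sum_le_sum fun i _ => one_le_sq_sum_toSign hD _

lemma le_sum_sum_correlation_sq (hD : Odd #D) :
    n * (#D ^ 2 + n - 1 : ℤ) ≤ ∑ x ∈ D, ∑ y ∈ D, correlation x y ^ 2 := by
  rw [sum_sum_correlation_sq]
  have hrow (i : Fin n) :
      (#D ^ 2 + n - 1 : ℤ) ≤ ∑ j, (∑ x ∈ D, toSign (x i) * toSign (x j)) ^ 2 := by
    have hdiag : ∑ x ∈ D, toSign (x i) * toSign (x i) = #D := by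
      simp only [toSign_mul_toSign, Bool.xor_self]
      simp [toSign]
    have hoff : (#(univ.erase i) : ℤ) ≤
        ∑ j ∈ univ.erase i, (∑ x ∈ D, toSign (x i) * toSign (x j)) ^ 2 := by
      rw [card_eq_sum_ones, Nat.cast_sum, Nat.cast_one]
      exact sum_le_sum fun j _ => by
        simpa only [toSign_mul_toSign] using one_le_sq_sum_toSign hD _
    have hcard : (#(univ.erase i) : ℤ) + 1 = n := by
      exact_mod_cast (card_erase_add_one (mem_univ i)).trans (by simp)
    rw [← add_sum_erase _ _ (mem_univ i), hdiag]
    linarith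
  calc n * (#D ^ 2 + n - 1 : ℤ) = ∑ _i : Fin n, (#D ^ 2 + n - 1 : ℤ) := by
        rw [sum_const, card_univ, Fintype.card_fin, nsmul_eq_mul]
    _ ≤ _ := sum_le_sum fun i _ => hrow i

end Correlation

namespace isBinCode

variable {n d : ℕ} {C : Finset (Fin n → Bool)}

lemma mono {d' : ℕ} (hC : isBinCode n d C) (hd : d' ≤ d) : isBinCode n d' C :=
  fun x hx y hy hxy => hd.trans (hC x hx y hy hxy)

lemma subset {D : Finset (Fin n → Bool)} (hC : isBinCode n d C) (hD : D ⊆ C) :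
    isBinCode n d D :=
  fun x hx y hy hxy => hC x (hD hx) y (hD hy) hxy

lemma plotkin_of_odd_card (hC : isBinCode n d C) (hodd : Odd #C) :
    (n : ℤ) ≤ #C * (n + (#C - 1) * (n - 2 * d)) := by
  have hrow : ∀ x ∈ C, ∑ y ∈ C, correlation x y ≤ n + (#C - 1) * (n - 2 * d) := by
    intro x hx
    have hoff : ∑ y ∈ C.erase x, correlation x y ≤ #(C.erase x) * (n - 2 * d : ℤ) := by
      rw [← nsmul_eq_mul]
      refine sum_le_card_nsmul _ _ _ fun y hy => ?_
      have hd : (d : ℤ) ≤ hammingDist x y := mod_cast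
        hC x hx y (mem_of_mem_erase hy) (ne_of_mem_erase hy).symm
      rw [correlation_eq]
      linarith
    have hcard : (#(C.erase x) : ℤ) + 1 = #C := mod_cast card_erase_add_one hx
    rw [← add_sum_erase _ _ hx, correlation_eq, hammingDist_self, ← hcard]
    push_cast
    linarith
  calc (n : ℤ) ≤ ∑ x ∈ C, ∑ y ∈ C, correlation x y := le_sum_sum_correlation hodd
    _ ≤ ∑ _x ∈ C, (n + (#C - 1) * (n - 2 * d) : ℤ) := sum_le_sum hrow
    _ = _ := by simp

/-- Two words at distance at least `n - 1` from `x` are within distance `1` of `xᶜ`. -/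
lemma card_filter_far_le_one (hC : isBinCode n 3 C) (x : Fin n → Bool) :
    #{y ∈ C | n - 1 ≤ hammingDist x y} ≤ 1 := by
  refine card_le_one.2 fun y hy z hz => by_contra fun hyz => ?_
  rw [mem_filter] at hy hz
  have h3 := hC y hy.1 z hz.1 hyz
  have htri := hammingDist_triangle_left y z xᶜ
  have hy' := hammingDist_compl_add_hammingDist x y
  have hz' := hammingDist_compl_add_hammingDist x z
  omega

lemma image_parityExtend {k : ℕ} (hC : isBinCode n (2 * k + 1) C) :
    isBinCode (n + 1) (2 * k + 2) (C.image parityExtend) := by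
  simp only [isBinCode, forall_mem_image]
  intro x hx y hy hxy
  have hle := (hC x hx y hy fun h => hxy (h ▸ rfl)).trans
    (hammingDist_le_hammingDist_parityExtend x y)
  obtain ⟨m, hm⟩ := even_hammingDist (even_weight_parityExtend x) (even_weight_parityExtend y)
  omega

lemma sum_correlation_sq_add_two_mul_le {C : Finset (Fin 9 → Bool)} (hC : isBinCode 9 4 C)
    (heven : ∀ x ∈ C, Even (weight x)) {x : Fin 9 → Bool} (hx : x ∈ C) :
    ∑ y ∈ C, (correlation x y ^ 2 + 2 * correlation x y) ≤ (3 * #C + 128 : ℤ) := by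
  -- At the distances `4, 6, 8` the correlation is `1, -3, -7` and `e ^ 2 + 2 * e` is `3, 3, 35`.
  have hpoint : ∀ y ∈ C.erase x, correlation x y ^ 2 + 2 * correlation x y ≤
      3 + 32 * if 9 - 1 ≤ hammingDist x y then 1 else 0 := by
    intro y hy
    have h4 := hC x hx y (mem_of_mem_erase hy) (ne_of_mem_erase hy).symm
    have h9 : hammingDist x y ≤ 9 := hammingDist_le_card_fintype.trans_eq (Fintype.card_fin 9)
    obtain ⟨m, hm⟩ := even_hammingDist (heven x hx) (heven y (mem_of_mem_erase hy))
    have hcases : hammingDist x y = 4 ∨ hammingDist x y = 6 ∨ hammingDist x y = 8 := by omega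
    rw [correlation_eq]
    rcases hcases with h | h | h <;> simp [h]
  have hfar : #{y ∈ C.erase x | 9 - 1 ≤ hammingDist x y} ≤ 1 :=
    ((hC.subset (erase_subset x C)).mono (by norm_num)).card_filter_far_le_one x
  have hcard : (#(C.erase x) : ℤ) + 1 = #C := mod_cast card_erase_add_one hx
  calc ∑ y ∈ C, (correlation x y ^ 2 + 2 * correlation x y)
      = 99 + ∑ y ∈ C.erase x, (correlation x y ^ 2 + 2 * correlation x y) := by
        rw [← add_sum_erase _ _ hx, correlation_eq, hammingDist_self]
        norm_num
    _ ≤ 99 + ∑ y ∈ C.erase x, (3 + 32 * if 9 - 1 ≤ hammingDist x y then 1 else 0 : ℤ) :=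
        add_le_add_right (sum_le_sum hpoint) _
    _ = 99 + 3 * #(C.erase x) + 32 * #{y ∈ C.erase x | 9 - 1 ≤ hammingDist x y} := by
        rw [sum_add_distrib, ← mul_sum, sum_boole, sum_const, nsmul_eq_mul]
        ring
    _ ≤ 3 * #C + 128 := by
        have : (#{y ∈ C.erase x | 9 - 1 ≤ hammingDist x y} : ℤ) ≤ 1 := mod_cast hfar
        linarith

lemma card_le_twenty {C : Finset (Fin 9 → Bool)} (hC : isBinCode 9 4 C)
    (heven : ∀ x ∈ C, Even (weight x)) (hodd : Odd #C) : #C ≤ 20 := by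
  have hlow : (9 * (#C ^ 2 + 9 - 1) + 2 * 9 : ℤ) ≤
      ∑ x ∈ C, ∑ y ∈ C, (correlation x y ^ 2 + 2 * correlation x y) := by
    simp only [sum_add_distrib, ← mul_sum]
    have h1 := le_sum_sum_correlation hodd
    have h2 := le_sum_sum_correlation_sq hodd
    push_cast at h1 h2
    linarith
  have hup : ∑ x ∈ C, ∑ y ∈ C, (correlation x y ^ 2 + 2 * correlation x y) ≤
      #C * (3 * #C + 128 : ℤ) := by
    rw [← nsmul_eq_mul]
    exact sum_le_card_nsmul _ _ _ fun x hx => sum_correlation_sq_add_two_mul_le hC heven hx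
  have : (#C : ℤ) ≤ 20 := by nlinarith
  exact_mod_cast this

end isBinCode

section M2

variable {n d k : ℕ}

lemma isBinCode.card_le_M2 {C : Finset (Fin n → Bool)} (hC : isBinCode n d C) :
    #C ≤ M2 n d := by
  refine le_csSup ⟨2 ^ n, ?_⟩ ⟨C, hC, rfl⟩
  rintro _ ⟨B, -, rfl⟩
  simpa using B.card_le_univ

lemma M2_le_of_forall (h : ∀ C, isBinCode n d C → #C ≤ k) : M2 n d ≤ k := by
  refine csSup_le ⟨0, ∅, fun _ h => absurd h (notMem_empty _), rfl⟩ ?_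
  rintro _ ⟨C, hC, rfl⟩
  exact h C hC

lemma M2_le_of_forall_card_ne (h : ∀ C, isBinCode n d C → #C ≠ k + 1) : M2 n d ≤ k := by
  refine M2_le_of_forall fun C hC => not_lt.mp fun hlt => ?_
  obtain ⟨D, hDC, hD⟩ := exists_subset_card_eq (show k + 1 ≤ #C from hlt)
  exact h D (hC.subset hDC) hD

lemma M2_eq_of_le {C : Finset (Fin n → Bool)} (hC : isBinCode n d C) (hcard : #C = k)
    (h : M2 n d ≤ k) : M2 n d = k :=
  h.antisymm (hcard ▸ hC.card_le_M2)

lemma isBinCode.card_filter_last_le {C : Finset (Fin (n + 1) → Bool)}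
    (hC : isBinCode (n + 1) d C) (b : Bool) : #{x ∈ C | x (Fin.last n) = b} ≤ M2 n d := by
  set F := {x ∈ C | x (Fin.last n) = b}
  have hdist : ∀ x ∈ F, ∀ y ∈ F, hammingDist (Fin.init x) (Fin.init y) = hammingDist x y := by
    intro x hx y hy
    simp [hammingDist_eq_hammingDist_init_add x y, (mem_filter.1 hx).2, (mem_filter.1 hy).2]
  have hinj : Set.InjOn Fin.init (F : Set (Fin (n + 1) → Bool)) := fun x hx y hy hxy => by
    rw [← hammingDist_eq_zero, ← hdist x hx y hy, hxy, hammingDist_self]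
  rw [← card_image_of_injOn hinj]
  refine isBinCode.card_le_M2 ?_
  simp only [isBinCode, forall_mem_image]
  intro x hx y hy hxy
  rw [hdist x hx y hy]
  exact hC x (mem_filter.1 hx).1 y (mem_filter.1 hy).1 fun h => hxy (h ▸ rfl)

lemma M2_succ_le_two_mul : M2 (n + 1) d ≤ 2 * M2 n d := by
  refine M2_le_of_forall fun C hC => ?_
  rw [← card_filter_add_card_filter_not (s := C) (fun x => x (Fin.last n) = true)]
  simp only [Bool.not_eq_true]
  linarith [hC.card_filter_last_le true, hC.card_filter_last_le false]

lemma M2_succ_succ_le (hd : 1 ≤ d) : M2 (n + 1) (d + 1) ≤ M2 n d := by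
  refine M2_le_of_forall fun C hC => ?_
  have hdist : ∀ x ∈ C, ∀ y ∈ C, x ≠ y → d ≤ hammingDist (Fin.init x) (Fin.init y) := by
    intro x hx y hy hxy
    have := hC x hx y hy hxy
    rw [hammingDist_eq_hammingDist_init_add] at this
    split_ifs at this <;> omega
  have hinj : Set.InjOn Fin.init (C : Set (Fin (n + 1) → Bool)) := fun x hx y hy hxy =>
    by_contra fun hne => by simpa [hxy] using (hdist x hx y hy hne).trans_lt' hd
  rw [← card_image_of_injOn hinj]
  refine isBinCode.card_le_M2 ?_
  simp only [isBinCode, forall_mem_image]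
  exact fun x hx y hy hxy => hdist x hx y hy fun h => hxy (h ▸ rfl)

end M2

-- `code7` is the `[7, 3, 4]` simplex code and `code8` the `[8, 4, 4]` extended Hamming code.
def code7 : Finset (Fin 7 → Bool) :=
  {![false, false, false, false, false, false, false],
  ![true, true, true, true, false, false, false],
  ![true, true, false, false, true, true, false],
  ![false, false, true, true, true, true, false],
  ![true, false, true, false, true, false, true],
  ![false, true, false, true, true, false, true],
  ![false, true, true, false, false, true, true],
  ![true, false, false, true, false, true, true]}

def code8 : Finset (Fin 8 → Bool) :=
  {![false, false, false, false, false, false, false, false],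
  ![true, true, true, true, false, false, false, false],
  ![true, true, false, false, true, true, false, false],
  ![false, false, true, true, true, true, false, false],
  ![true, false, true, false, true, false, true, false],
  ![false, true, false, true, true, false, true, false],
  ![false, true, true, false, false, true, true, false],
  ![true, false, false, true, false, true, true, false],
  ![false, true, true, false, true, false, false, true],
  ![true, false, false, true, true, false, false, true],
  ![true, false, true, false, false, true, false, true],
  ![false, true, false, true, false, true, false, true],
  ![true, true, false, false, false, false, true, true],
  ![false, false, true, true, false, false, true, true],
  ![false, false, false, false, true, true, true, true],
  ![true, true, true, true, true, true, true, true]}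

def code9 : Finset (Fin 9 → Bool) :=
  {![true, true, false, true, false, true, true, true, true],
  ![false, false, false, false, true, false, false, false, false],
  ![false, true, false, false, false, false, true, true, false],
  ![false, true, true, true, true, true, false, true, true],
  ![false, false, false, false, false, true, false, true, true],
  ![true, false, true, false, true, false, true, true, true],
  ![true, true, true, false, false, true, false, true, false],
  ![false, true, false, true, true, false, true, false, true],
  ![false, true, false, true, false, true, false, false, false],
  ![true, false, false, true, false, false, false, false, true],
  ![true, false, false, false, false, true, true, false, false],
  ![true, false, true, true, true, true, false, false, false],
  ![false, false, true, true, false, false, false, true, false],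
  ![true, true, false, false, true, true, false, false, true],
  ![false, false, true, true, false, true, true, false, true],
  ![true, true, false, true, true, false, false, true, false],
  ![false, false, false, true, true, true, true, true, false],
  ![false, true, true, false, false, false, false, false, true],
  ![true, true, true, true, false, false, true, false, false],
  ![false, true, true, false, true, true, true, false, false]}

set_option maxRecDepth 10000 in
lemma isBinCode_code7 : isBinCode 7 4 code7 := by unfold isBinCode; decide

set_option maxRecDepth 10000 in
lemma isBinCode_code8 : isBinCode 8 4 code8 := by unfold isBinCode; decide

set_option maxRecDepth 10000 in
lemma isBinCode_code9 : isBinCode 9 4 code9 := by unfold isBinCode; decide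

lemma M2_seven_four : M2 7 4 = 8 := by
  refine M2_eq_of_le isBinCode_code7 (by decide) (M2_le_of_forall_card_ne fun C hC hcard => ?_)
  have := hC.plotkin_of_odd_card (by rw [hcard]; decide)
  rw [hcard] at this
  norm_num at this

lemma M2_eight_four : M2 8 4 = 16 :=
  M2_eq_of_le isBinCode_code8 (by decide)
    (M2_succ_le_two_mul.trans_eq (by rw [M2_seven_four]))

lemma M2_eight_three_le : M2 8 3 ≤ 20 := by
  refine M2_le_of_forall_card_ne fun C hC hcard => ?_
  have hcard' : #(C.image parityExtend) = 21 := by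
    rw [card_image_of_injective _ parityExtend_injective, hcard]
  have := (hC.image_parityExtend (k := 1)).card_le_twenty
    (by simp [even_weight_parityExtend]) (by rw [hcard']; decide)
  omega

lemma M2_nine_four : M2 9 4 = 20 :=
  M2_eq_of_le isBinCode_code9 (by decide)
    ((M2_succ_succ_le (n := 8) (d := 3) (by norm_num)).trans M2_eight_three_le)

theorem M2_not_log_convex :
    M2 7 4 = 8 ∧ M2 8 4 = 16 ∧ M2 9 4 = 20 ∧
    M2 7 4 * M2 9 4 < M2 8 4 ^ 2 := by
  refine ⟨M2_seven_four, M2_eight_four, M2_nine_four, ?_⟩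
  rw [M2_seven_four, M2_eight_four, M2_nine_four]
  norm_num
end

section
/- Let G be a k×n matrix over a field F, let v_1,…,v_n be its columns, let i ∈ [n] and R ⊆ [n]\{i}. Suppose that for every x ∈ F^k, the value (x, v_i) is determined by the values {(x, v_j) : j ∈ R}. Then v_i ∈ span{v_j : j ∈ R}. -/
open Finset

theorem determined_column_in_span {F : Type*} [Field F] (k n : ℕ)
    (G : Matrix (Fin k) (Fin n) F) (i : Fin n) (R : Finset (Fin n)) (hiR : i ∉ R)
    (h : ∃ φ : (R → F) → F, ∀ x : Fin k → F,
      (∑ a, x a * G a i) = φ (fun j : R => ∑ a, x a * G a (j : Fin n))) :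
    (fun a => G a i) ∈
      Submodule.span F ((fun j : Fin n => fun a => G a j) '' (R : Set (Fin n))) := by
  by_contra hmem
  obtain ⟨f, hfi, hker⟩ := Submodule.exists_dual_map_eq_bot_of_notMem hmem inferInstance
  obtain ⟨φ, hφ⟩ := h
  -- define x
  set x : Fin k → F := fun a => f (Pi.single a 1) with hx
  have key : ∀ v : Fin k → F, ∑ a, x a * v a = f v := by
    intro v
    conv_rhs => rw [pi_eq_sum_univ v, map_sum]
    refine Finset.sum_congr rfl fun a _ => ?_
    rw [map_smul, smul_eq_mul, mul_comm]
    have hs : (Pi.single a 1 : Fin k → F) = fun j => if a = j then 1 else 0 := by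
      funext j; simp [Pi.single_apply, eq_comm]
    simp only [hx, hs]
  have hzero : ∀ j ∈ R, f (fun a => G a j) = 0 := by
    intro j hj
    have : (fun a => G a j) ∈ Submodule.span F ((fun j : Fin n => fun a => G a j) '' (R : Set (Fin n))) :=
      Submodule.subset_span ⟨j, hj, rfl⟩
    have := Submodule.mem_map_of_mem (f := f) this
    rw [hker] at this
    simpa using this
  have h1 := hφ x
  have h2 := hφ 0
  simp only [Pi.zero_apply, zero_mul, Finset.sum_const_zero] at h2
  rw [key] at h1
  have : (fun j : R => ∑ a, x a * G a (j : Fin n)) = (fun _ : R => (0 : F)) := by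
    funext j
    rw [key]
    exact hzero j j.2
  rw [this, ← h2] at h1
  exact hfi h1
end

section
/- Let C be an (n,k,r) LRC code over an alphabet of size q with minimum distance d. Then for every integer s with 1 ≤ s ≤ n/(r+1), k ≤ sr + log_q M_q(n - s(r+1), d), where M_q(m,d) is the maximum size of a q-ary code of length m and distance d. -/
open Finset

def isCode {Q : Type*} [DecidableEq Q] (m d : ℕ) (D : Finset (Fin m → Q)) : Prop :=
  ∀ c ∈ D, ∀ c' ∈ D, c ≠ c' → d ≤ (univ.filter fun i => c i ≠ c' i).card

noncomputable def maxCode (Q : Type*) [Fintype Q] [DecidableEq Q] (m d : ℕ) : ℕ :=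
  sSup {M | ∃ D : Finset (Fin m → Q), isCode m d D ∧ D.card = M}

lemma maxCode_bdd (Q : Type*) [Fintype Q] [DecidableEq Q] (m d : ℕ) :
    BddAbove {M | ∃ D : Finset (Fin m → Q), isCode m d D ∧ D.card = M} := by
  refine ⟨Fintype.card (Fin m → Q), ?_⟩
  rintro M ⟨D, -, rfl⟩
  exact D.card_le_univ

lemma one_le_maxCode (Q : Type*) [Fintype Q] [DecidableEq Q] [Nonempty Q] (m d : ℕ) :
    1 ≤ maxCode Q m d := by
  obtain ⟨q0⟩ := ‹Nonempty Q›
  refine le_csSup (maxCode_bdd Q m d) ⟨{fun _ => q0}, ?_, by simp⟩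
  intro c hc c' hc' hne
  simp only [Finset.mem_singleton] at hc hc'
  exact absurd (hc.trans hc'.symm) hne

theorem CM_shortening_bound {Q : Type*} [Fintype Q] [DecidableEq Q]
    (q n k d r : ℕ) (hq : Fintype.card Q = q) (hq2 : 2 ≤ q)
    (C : Finset (Fin n → Q)) (hk : C.card = q ^ k)
    (hdist : isCode n d C)
    (hloc : ∀ i : Fin n, ∃ R : Finset (Fin n), i ∈ R ∧ R.card ≤ r + 1 ∧
      ∀ c ∈ C, ∀ c' ∈ C, (∀ j ∈ R.erase i, c j = c' j) → c i = c' i)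
    (s : ℕ) (hs1 : 1 ≤ s) (hsn : s * (r + 1) ≤ n) :
    (k : ℝ) ≤ s * r + Real.logb q (maxCode Q (n - s * (r + 1)) d) := by
  classical
  have hn0 : 0 < n := lt_of_lt_of_le (by positivity) hsn
  have hQne : Nonempty Q := by
    rw [← Fintype.card_pos_iff, hq]; omega
  have hq1R : (1 : ℝ) < q := by exact_mod_cast hq2.trans_lt' one_lt_two
  have hlogb_nonneg : 0 ≤ Real.logb q (maxCode Q (n - s * (r + 1)) d) := by
    apply Real.logb_nonneg hq1R
    exact_mod_cast one_le_maxCode Q _ d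
  -- construction of repair groups
  have key : ∀ s', s' * (r + 1) ≤ n → ∃ (i : ℕ → Fin n) (R : ℕ → Finset (Fin n)),
      ∀ j < s', i j ∈ R j ∧ (R j).card ≤ r + 1 ∧
        (∀ c ∈ C, ∀ c' ∈ C, (∀ y ∈ (R j).erase (i j), c y = c' y) → c (i j) = c' (i j)) ∧
        ∀ l < j, i j ∉ R l := by
    intro s'
    induction s' with
    | zero => exact fun _ => ⟨fun _ => ⟨0, hn0⟩, fun _ => ∅, fun j hj => absurd hj (by omega)⟩
    | succ t ih =>
      intro h
      obtain ⟨i, R, hG⟩ := ih (by nlinarith)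
      have hUcard : ((Finset.range t).biUnion R).card < n := by
        calc ((Finset.range t).biUnion R).card ≤ ∑ j ∈ Finset.range t, (R j).card :=
              Finset.card_biUnion_le
          _ ≤ ∑ _j ∈ Finset.range t, (r + 1) := by
              apply Finset.sum_le_sum
              intro j hj
              exact (hG j (Finset.mem_range.mp hj)).2.1
          _ = t * (r + 1) := by simp [Finset.sum_const, mul_comm]
          _ < n := by nlinarith
      have : ∃ x : Fin n, x ∉ (Finset.range t).biUnion R := by
        by_contra hcon
        push_neg at hcon
        have : (Finset.univ : Finset (Fin n)) ⊆ (Finset.range t).biUnion R :=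
          fun x _ => hcon x
        have := Finset.card_le_card this
        simp at this
        omega
      obtain ⟨x, hx⟩ := this
      obtain ⟨Rx, hxR, hRxcard, hrep⟩ := hloc x
      refine ⟨Function.update i t x, Function.update R t Rx, ?_⟩
      intro j hj
      rcases lt_or_eq_of_le (Nat.lt_succ_iff.mp hj) with hjt | hjt
      · obtain ⟨h1, h2, h3, h4⟩ := hG j hjt
        rw [Function.update_of_ne (Nat.ne_of_lt hjt), Function.update_of_ne (Nat.ne_of_lt hjt)]
        refine ⟨h1, h2, h3, ?_⟩
        intro l hl
        rw [Function.update_of_ne (Nat.ne_of_lt (hl.trans hjt))]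
        exact h4 l hl
      · subst hjt
        rw [Function.update_self, Function.update_self]
        refine ⟨hxR, hRxcard, hrep, ?_⟩
        intro l hl
        rw [Function.update_of_ne (Nat.ne_of_lt hl)]
        intro hmem
        exact hx (Finset.mem_biUnion.mpr ⟨l, Finset.mem_range.mpr hl, hmem⟩)
  obtain ⟨i, R, hG⟩ := key s hsn
  set U : Finset (Fin n) := (Finset.range s).biUnion R with hU
  set I : Finset (Fin n) := (Finset.range s).image i with hI
  have hIU : I ⊆ U := by
    intro x hx
    obtain ⟨j, hj, rfl⟩ := Finset.mem_image.mp hx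
    exact Finset.mem_biUnion.mpr ⟨j, hj, (hG j (Finset.mem_range.mp hj)).1⟩
  have hUcard : U.card ≤ s * (r + 1) := by
    calc U.card ≤ ∑ j ∈ Finset.range s, (R j).card := Finset.card_biUnion_le
      _ ≤ ∑ _j ∈ Finset.range s, (r + 1) := by
          apply Finset.sum_le_sum
          intro j hj
          exact (hG j (Finset.mem_range.mp hj)).2.1
      _ = s * (r + 1) := by simp [Finset.sum_const, mul_comm]
  have hIcard : I.card = s := by
    rw [hI, Finset.card_image_of_injOn, Finset.card_range]
    intro a ha b hb hab
    by_contra hne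
    rcases Nat.lt_or_ge a b with hlt | hge
    · exact (hG b (Finset.mem_range.mp hb)).2.2.2 a hlt
        (hab ▸ (hG a (Finset.mem_range.mp ha)).1)
    · have hlt : b < a := by omega
      exact (hG a (Finset.mem_range.mp ha)).2.2.2 b hlt
        (hab ▸ (hG b (Finset.mem_range.mp hb)).1)
  obtain ⟨T, hUT, hTcard⟩ : ∃ T, U ⊆ T ∧ T.card = s * (r + 1) :=
    Finset.exists_superset_card_eq hUcard (by simpa using hsn)
  have hIT : I ⊆ T := hIU.trans hUT
  -- determination lemma
  have det : ∀ c ∈ C, ∀ c' ∈ C, (∀ x ∈ T \ I, c x = c' x) → ∀ x ∈ T, c x = c' x := by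
    intro c hc c' hc' hagree
    have aux : ∀ j ≤ s, ∀ x ∈ T, x ∉ (Finset.Ico j s).image i → c x = c' x := by
      intro j
      induction j with
      | zero =>
        intro _ x hxT hx
        refine hagree x (Finset.mem_sdiff.mpr ⟨hxT, ?_⟩)
        rw [hI]
        rwa [Finset.range_eq_Ico]
      | succ j ihj =>
        intro hjs x hxT hx
        have hj : j < s := by omega
        by_cases hxj : x ∈ (Finset.Ico j s).image i
        · obtain ⟨l, hl, hxl⟩ := Finset.mem_image.mp hxj
          rw [Finset.mem_Ico] at hl
          have hlj : l = j := by
            by_contra hne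
            exact hx (Finset.mem_image.mpr ⟨l, Finset.mem_Ico.mpr ⟨by omega, hl.2⟩, hxl⟩)
          subst hlj
          subst hxl
          apply (hG l hj).2.2.1 c hc c' hc'
          intro y hy
          obtain ⟨hy1, hy2⟩ := Finset.mem_erase.mp hy
          apply ihj (le_of_lt hj)
          · exact hUT (Finset.mem_biUnion.mpr ⟨l, Finset.mem_range.mpr hj, hy2⟩)
          · intro hycon
            obtain ⟨l', hl', hyl'⟩ := Finset.mem_image.mp hycon
            rw [Finset.mem_Ico] at hl'
            rcases eq_or_lt_of_le hl'.1 with h | h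
            · exact hy1 (h ▸ hyl').symm
            · exact (hG l' hl'.2).2.2.2 l h (hyl' ▸ hy2)
        · exact ihj (by omega) x hxT hxj
    intro x hxT
    exact aux s le_rfl x hxT (by simp)
  -- the restriction map and counting
  set ρ : (Fin n → Q) → ({ x // x ∈ T } → Q) := fun c x => c x.1 with hρ
  set A : Finset ({ x // x ∈ T } → Q) := C.image ρ with hA
  have hTIcard : (T \ I).card = s * r := by
    rw [Finset.card_sdiff_of_subset hIT, hTcard, hIcard]
    ring_nf
    omega
  have hAcard : A.card ≤ q ^ (s * r) := by
    set σ : ({ x // x ∈ T } → Q) → ({ x // x ∈ T \ I } → Q) :=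
      fun f y => f ⟨y.1, (Finset.sdiff_subset (Finset.mem_coe.mp y.2 |> fun h => h) : _)⟩ with hσ
    have hinj : Set.InjOn σ A := by
      intro f hf g hg hfg
      obtain ⟨c, hc, rfl⟩ := Finset.mem_image.mp hf
      obtain ⟨c', hc', rfl⟩ := Finset.mem_image.mp hg
      have hTI : ∀ x ∈ T \ I, c x = c' x := by
        intro x hx
        have := congrFun hfg ⟨x, hx⟩
        simpa [hσ, hρ] using this
      funext x
      exact det c hc c' hc' hTI x.1 x.2
    calc A.card ≤ Fintype.card ({ x // x ∈ T \ I } → Q) := by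
          have := Finset.card_le_card_of_injOn σ (fun a _ => Finset.mem_univ (σ a)) hinj
          simpa using this
      _ = q ^ (s * r) := by
          rw [Fintype.card_fun, hq, Fintype.card_coe, hTIcard]
  by_cases hk' : k ≤ s * r
  · have : (k : ℝ) ≤ (s : ℝ) * r := by exact_mod_cast Nat.cast_le.mpr (by exact_mod_cast hk' : k ≤ s * r) |>.trans_eq (by push_cast; ring)
    linarith
  · push_neg at hk'
    have hksr : s * r ≤ k := le_of_lt hk'
    -- pigeonhole
    have hCne : C.Nonempty := by
      rw [← Finset.card_pos, hk]
      positivity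
    have hAne : A.Nonempty := hCne.image ρ
    have hmul : A.card * q ^ (k - s * r) ≤ C.card := by
      rw [hk]
      calc A.card * q ^ (k - s * r) ≤ q ^ (s * r) * q ^ (k - s * r) :=
            Nat.mul_le_mul_right _ hAcard
        _ = q ^ k := by rw [← pow_add]; congr 1; omega
    obtain ⟨t0, ht0, hfib⟩ := Finset.exists_le_card_fiber_of_mul_le_card_of_maps_to
      (fun a ha => Finset.mem_image_of_mem ρ ha) hAne hmul
    set C' : Finset (Fin n → Q) := C.filter (fun c => ρ c = t0) with hC'
    have hC'sub : C' ⊆ C := Finset.filter_subset _ _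
    have hagreeT : ∀ c ∈ C', ∀ c' ∈ C', ∀ x ∈ T, c x = c' x := by
      intro c hc c' hc' x hx
      have h1 := (Finset.mem_filter.mp hc).2
      have h2 := (Finset.mem_filter.mp hc').2
      have := congrFun (h1.trans h2.symm) ⟨x, hx⟩
      simpa [hρ] using this
    -- puncturing
    set m := n - s * (r + 1) with hm
    have hTc : Tᶜ.card = m := by
      rw [Finset.card_compl, hTcard]
      simp [hm]
    set e := Tᶜ.orderIsoOfFin hTc with he
    set π : (Fin n → Q) → (Fin m → Q) := fun c x => c (e x).1 with hπ
    set D : Finset (Fin m → Q) := C'.image π with hD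
    have hπinj : Set.InjOn π C' := by
      intro c hc c' hc' hcc
      funext y
      by_cases hy : y ∈ T
      · exact hagreeT c hc c' hc' y hy
      · have hy' : y ∈ Tᶜ := Finset.mem_compl.mpr hy
        have := congrFun hcc (e.symm ⟨y, hy'⟩)
        simpa [hπ] using this
    have hDcard : D.card = C'.card := Finset.card_image_of_injOn hπinj
    have hDcode : isCode m d D := by
      intro a ha b hb hab
      obtain ⟨c, hc, rfl⟩ := Finset.mem_image.mp ha
      obtain ⟨c', hc', rfl⟩ := Finset.mem_image.mp hb
      have hne : c ≠ c' := fun h => hab (h ▸ rfl)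
      have hd := hdist c (hC'sub hc) c' (hC'sub hc') hne
      have hsub : ∀ x ∈ (univ.filter fun x : Fin n => c x ≠ c' x), x ∈ Tᶜ := by
        intro x hx
        simp only [Finset.mem_filter, Finset.mem_univ, true_and] at hx
        apply Finset.mem_compl.mpr
        intro hxT
        exact hx (hagreeT c hc c' hc' x hxT)
      have hcard_eq : (univ.filter fun x : Fin n => c x ≠ c' x).card =
          (univ.filter fun x : Fin m => π c x ≠ π c' x).card := by
        refine Finset.card_bij' (fun x hx => e.symm ⟨x, hsub x hx⟩) (fun y _ => (e y).1)
          ?_ ?_ ?_ ?_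
        case refine_1 =>
          intro x hx
          simp only [Finset.mem_filter, Finset.mem_univ, true_and] at hx ⊢
          simpa [hπ] using hx
        case refine_2 =>
          intro y hy
          rw [Finset.mem_filter] at hy ⊢
          exact ⟨Finset.mem_univ _, hy.2⟩
        case refine_3 =>
          intro x hx
          simp
        case refine_4 =>
          intro y hy
          simp
      exact hcard_eq ▸ hd
    have hmax : (q : ℝ) ^ (k - s * r) ≤ maxCode Q m d := by
      have h1 : q ^ (k - s * r) ≤ maxCode Q m d := by
        calc q ^ (k - s * r) ≤ C'.card := hfib
          _ = D.card := hDcard.symm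
          _ ≤ maxCode Q m d := le_csSup (maxCode_bdd Q m d) ⟨D, hDcode, rfl⟩
      exact_mod_cast h1
    have hlog : ((k : ℝ) - s * r) ≤ Real.logb q (maxCode Q m d) := by
      have hM1 : (1 : ℝ) ≤ maxCode Q m d := by exact_mod_cast one_le_maxCode Q m d
      have h2 : Real.logb q ((q : ℝ) ^ (k - s * r)) ≤ Real.logb q (maxCode Q m d) :=
        (Real.logb_le_logb hq1R (by positivity) (by linarith)).mpr hmax
      rwa [Real.logb_pow, Real.logb_self_eq_one hq1R, mul_one,
        Nat.cast_sub hksr, Nat.cast_mul] at h2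
    linarith
end

section
/- Let I_1,…,I_w be a partition of [n] (some blocks possibly empty), let 0 < p < 1/2, and A = 2/p^w. Then there exists an index k ∈ {1,…,w} such that |I_k| ≥ max{ A·∑_{j=k+1}^{w} |I_j|, n/(2wA^w) }. -/
/-!
Take the first block that dominates, by the factor `A`, the union of the blocks after it (the
last block always does). Every earlier block fails to dominate its successors, so the tail
starting at it is less than `1 + A` times the tail after it; hence `n ≤ (1 + A)^k T_k` for the
chosen block `k`, whose tail satisfies `T_k ≤ (1 + 1/A) |I_k| ≤ 2 |I_k|`. Finally `p < 1/2`
gives `A ≥ 2^(w+1)`, so `(1 + A)^k ≤ (2A)^(w-1) ≤ A^w`.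
-/

open Finset

section OrderedField

variable {K : Type*} [Field K] [LinearOrder K] [IsStrictOrderedRing K] {A : K}

theorem exists_dominating_index (hA : 1 ≤ A) :
    ∀ (w : ℕ) (c : Fin (w + 1) → K), (∀ j, 0 ≤ c j) →
      ∃ k : Fin (w + 1),
        A * ∑ j ∈ univ.filter (fun j => k < j), c j ≤ c k ∧
        ∑ j, c j ≤ 2 * (1 + A) ^ (k : ℕ) * c k
  | 0, c, hc => ⟨0, by
    simp only [sum_filter, Fin.sum_univ_succ, Fin.sum_univ_zero, lt_self_iff_false, if_false,
      Fin.val_zero, pow_zero, mul_one]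
    constructor <;> linarith [hc 0]⟩
  | w + 1, c, hc => by
    have htail : ∀ k : Fin (w + 1), ∑ j ∈ univ.filter (fun j => k.succ < j), c j =
        ∑ j ∈ univ.filter (fun j => k < j), c j.succ := by
      intro k
      simp only [sum_filter, Fin.sum_univ_succ, Fin.succ_lt_succ_iff, Fin.not_lt_zero, if_false,
        zero_add]
    have hrest : ∑ j, c j = c 0 + ∑ j : Fin (w + 1), c j.succ := Fin.sum_univ_succ c
    have hrest_nonneg : 0 ≤ ∑ j : Fin (w + 1), c j.succ := sum_nonneg fun j _ => hc j.succ
    by_cases hfirst : A * ∑ j : Fin (w + 1), c j.succ ≤ c 0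
    · refine ⟨0, ?_, ?_⟩
      · simpa [sum_filter, Fin.sum_univ_succ, Fin.succ_pos] using hfirst
      · have : ∑ j : Fin (w + 1), c j.succ ≤ c 0 := by nlinarith
        simp only [Fin.val_zero, pow_zero, mul_one]
        linarith
    · obtain ⟨k, hdom, htotal⟩ := exists_dominating_index hA w (fun j => c j.succ) fun j => hc j.succ
      refine ⟨k.succ, by rwa [htail], ?_⟩
      calc ∑ j, c j ≤ (1 + A) * ∑ j : Fin (w + 1), c j.succ := by linarith
        _ ≤ (1 + A) * (2 * (1 + A) ^ (k : ℕ) * c k.succ) := by gcongr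
        _ = 2 * (1 + A) ^ (k.succ : ℕ) * c k.succ := by rw [Fin.val_succ, pow_succ]; ring

theorem one_add_pow_le_pow_succ {m : ℕ} (hA : 2 ^ m ≤ A) : (1 + A) ^ m ≤ A ^ (m + 1) :=
  have hA1 : 1 ≤ A := (one_le_pow₀ one_le_two).trans hA
  calc (1 + A) ^ m ≤ (2 * A) ^ m := by gcongr; linarith
    _ = 2 ^ m * A ^ m := mul_pow _ _ _
    _ ≤ A * A ^ m := by gcongr
    _ = A ^ (m + 1) := (pow_succ' A m).symm

theorem two_pow_succ_le_two_div_pow {p : K} (hp0 : 0 < p) (hp : p ≤ 1 / 2) (w : ℕ) :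
    (2 : K) ^ (w + 1) ≤ 2 / p ^ w := by
  rw [le_div_iff₀ (by positivity), pow_succ', mul_assoc, ← mul_pow]
  have : (2 * p) ^ w ≤ 1 := pow_le_one₀ (by positivity) (by linarith)
  linarith

end OrderedField

theorem partition_dominating_block_general (n w : ℕ) (hw : 1 ≤ w)
    (I : Fin w → Finset (Fin n))
    (hcover : (univ : Finset (Fin w)).biUnion I = univ)
    (p A : ℝ) (hp0 : 0 < p) (hp : p < 1 / 2) (hA : A = 2 / p ^ w) :
    ∃ k : Fin w,
      A * ∑ j ∈ univ.filter (fun j => k < j), ((I j).card : ℝ) ≤ ((I k).card : ℝ) ∧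
      (n : ℝ) / (2 * w * A ^ w) ≤ ((I k).card : ℝ) := by
  obtain ⟨m, rfl⟩ : ∃ m, w = m + 1 := ⟨w - 1, by omega⟩
  have hA_large : 2 ^ (m + 2) ≤ A := hA ▸ two_pow_succ_le_two_div_pow hp0 hp.le (m + 1)
  have hA_one : 1 ≤ A := (one_le_pow₀ one_le_two).trans hA_large
  obtain ⟨k, hdom, htotal⟩ :=
    exists_dominating_index hA_one m (fun j => ((I j).card : ℝ)) fun _ => by positivity
  refine ⟨k, hdom, ?_⟩
  have hn : (n : ℝ) ≤ ∑ j, ((I j).card : ℝ) := by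
    have := card_biUnion_le (s := univ) (t := I)
    rw [hcover, card_univ, Fintype.card_fin] at this
    exact_mod_cast this
  have hpow : (1 + A) ^ (k : ℕ) ≤ A ^ (m + 1) :=
    (pow_le_pow_right₀ (by linarith) (Nat.lt_succ_iff.mp k.isLt)).trans
      (one_add_pow_le_pow_succ ((pow_le_pow_right₀ one_le_two (by omega)).trans hA_large))
  rw [div_le_iff₀ (by positivity)]
  calc (n : ℝ) ≤ 2 * (1 + A) ^ (k : ℕ) * (I k).card := hn.trans htotal
    _ ≤ 2 * A ^ (m + 1) * (I k).card := by gcongr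
    _ = (I k).card * (2 * 1 * A ^ (m + 1)) := by ring
    _ ≤ (I k).card * (2 * ((m + 1 : ℕ) : ℝ) * A ^ (m + 1)) := by
      gcongr
      exact_mod_cast Nat.le_add_left 1 m

theorem partition_dominating_block (n w : ℕ) (hw : 1 ≤ w)
    (I : Fin w → Finset (Fin n))
    (hdisj : ∀ i j : Fin w, i ≠ j → Disjoint (I i) (I j))
    (hcover : (univ : Finset (Fin w)).biUnion I = univ)
    (p A : ℝ) (hp0 : 0 < p) (hp : p < 1 / 2) (hA : A = 2 / p ^ w) :
    ∃ k : Fin w,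
      A * ∑ j ∈ univ.filter (fun j => k < j), ((I j).card : ℝ) ≤ ((I k).card : ℝ) ∧
      (n : ℝ) / (2 * w * A ^ w) ≤ ((I k).card : ℝ) :=
  partition_dominating_block_general n w hw I hcover p A hp0 hp hA
end
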